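/- arXiv:1105.1307 — 4 statements merged into one kernel-verified Lean document; each statement's English description precedes it below -/
import Mathlib

section
/- Let a_1,…,a_N be complex numbers and let S(α) = Σ_{n=1}^N a_n e(nα). Then for every real α and every δ with 0 < δ, one has |S(α)|² ≥ (1/δ)·∫_{α−δ/2}^{α+δ/2} |S(u)|² du − ∫_{α−δ/2}^{α+δ/2} |S(u)·S'(u)| du, where S'(u) = Σ_{n=1}^N 2πi·n·a_n e(nu) is the derivative of S. -/
/-!
Write `F = ‖S‖²`, so `F' = 2⟪S, S'⟫` and `|F'| ≤ 2‖S S'‖`. On each half of the interval,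
`F u ≤ F α + ∫_{half} |F'|` by the fundamental theorem of calculus; averaging over the whole
interval gives `(1/δ) ∫ F ≤ F α + (1/2) ∫ |F'| ≤ F α + ∫ ‖S S'‖`.
-/

open MeasureTheory intervalIntegral Real

open Set
open scoped Interval

section FundamentalTheorem

variable {E : Type*} [NormedAddCommGroup E] [NormedSpace ℝ E]
  {f f' : ℝ → E} {a b : ℝ}

theorem intervalIntegrable_of_forall_hasDerivAt (hab : a ≤ b)
    (hf : ∀ t ∈ Icc a b, HasDerivAt f (f' t) t) : IntervalIntegrable f volume a b :=
  ContinuousOn.intervalIntegrable_of_Icc hab fun t ht => (hf t ht).continuousAt.continuousWithinAt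

theorem norm_sub_le_integral_norm_deriv [CompleteSpace E] (hab : a ≤ b)
    (hf : ∀ t ∈ Icc a b, HasDerivAt f (f' t) t) (hf' : IntervalIntegrable f' volume a b)
    {x y : ℝ} (hx : x ∈ Icc a b) (hy : y ∈ Icc a b) :
    ‖f y - f x‖ ≤ ∫ t in a..b, ‖f' t‖ := by
  have hsub : uIcc x y ⊆ Icc a b := uIcc_subset_Icc hx hy
  rw [← integral_eq_sub_of_hasDerivAt (fun t ht => hf t (hsub ht))
    (hf'.mono_set (by rwa [uIcc_of_le hab])), integral_of_le hab]
  calc ‖∫ t in x..y, f' t‖ ≤ ∫ t in Ι x y, ‖f' t‖ := norm_integral_le_integral_norm_uIoc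
    _ ≤ ∫ t in Ioc a b, ‖f' t‖ :=
      setIntegral_mono_set hf'.norm.1 (Filter.Eventually.of_forall fun _ => norm_nonneg _)
        (Ioc_subset_Ioc (le_min hx.1 hy.1) (max_le hx.2 hy.2)).eventuallyLE

end FundamentalTheorem

section RealValued

variable {F F' : ℝ → ℝ}

theorem integral_le_mul_add_integral_norm_deriv {a b c : ℝ} (hab : a ≤ b)
    (hF : ∀ t ∈ Icc a b, HasDerivAt F (F' t) t) (hF' : IntervalIntegrable F' volume a b)
    (hc : c ∈ Icc a b) :
    ∫ t in a..b, F t ≤ (b - a) * (F c + ∫ t in a..b, ‖F' t‖) :=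
  calc ∫ t in a..b, F t ≤ ∫ _ in a..b, (F c + ∫ t in a..b, ‖F' t‖) :=
        integral_mono_on hab (intervalIntegrable_of_forall_hasDerivAt hab hF)
          intervalIntegrable_const fun u hu => sub_le_iff_le_add'.1 <|
            (le_abs_self _).trans (norm_sub_le_integral_norm_deriv hab hF hF' hc hu)
    _ = _ := by rw [intervalIntegral.integral_const, smul_eq_mul]

theorem integral_le_mul_add_half_integral_norm_deriv {α δ : ℝ} (hδ : 0 ≤ δ)
    (hF : ∀ t ∈ Icc (α - δ / 2) (α + δ / 2), HasDerivAt F (F' t) t)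
    (hF' : IntervalIntegrable F' volume (α - δ / 2) (α + δ / 2)) :
    ∫ t in (α - δ / 2)..(α + δ / 2), F t ≤
      δ * F α + δ / 2 * ∫ t in (α - δ / 2)..(α + δ / 2), ‖F' t‖ := by
  have hl : α - δ / 2 ≤ α := by linarith
  have hr : α ≤ α + δ / 2 := by linarith
  have hFl : ∀ t ∈ Icc (α - δ / 2) α, HasDerivAt F (F' t) t :=
    fun t ht => hF t ⟨ht.1, ht.2.trans hr⟩
  have hFr : ∀ t ∈ Icc α (α + δ / 2), HasDerivAt F (F' t) t :=
    fun t ht => hF t ⟨hl.trans ht.1, ht.2⟩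
  have hF'l : IntervalIntegrable F' volume (α - δ / 2) α :=
    hF'.mono_set (by rw [uIcc_of_le hl, uIcc_of_le (hl.trans hr)]; exact Icc_subset_Icc le_rfl hr)
  have hF'r : IntervalIntegrable F' volume α (α + δ / 2) :=
    hF'.mono_set (by rw [uIcc_of_le hr, uIcc_of_le (hl.trans hr)]; exact Icc_subset_Icc hl le_rfl)
  have left := integral_le_mul_add_integral_norm_deriv hl hFl hF'l (right_mem_Icc.2 hl)
  have right := integral_le_mul_add_integral_norm_deriv hr hFr hF'r (left_mem_Icc.2 hr)
  rw [← integral_add_adjacent_intervals hF'l.norm hF'r.norm,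
    ← integral_add_adjacent_intervals
      (intervalIntegrable_of_forall_hasDerivAt hl hFl)
      (intervalIntegrable_of_forall_hasDerivAt hr hFr)]
  linarith

end RealValued

theorem hasDerivAt_sum_exp (s : Finset ℕ) (a : ℕ → ℂ) (t : ℝ) :
    HasDerivAt (fun u : ℝ => ∑ n ∈ s, a n * Complex.exp (2 * π * Complex.I * n * u))
      (2 * π * Complex.I * ∑ n ∈ s, n * a n * Complex.exp (2 * π * Complex.I * n * t)) t := by
  rw [Finset.mul_sum]
  refine HasDerivAt.fun_sum fun n _ => ?_
  have hlin : HasDerivAt (fun u : ℝ => 2 * π * Complex.I * n * (u : ℂ))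
      (2 * π * Complex.I * n) t := by
    simpa using (Complex.ofRealCLM.hasDerivAt (x := t)).const_mul (2 * π * Complex.I * n)
  exact (hlin.cexp.const_mul (a n)).congr_deriv (by ring)

/-- Gallagher-type pointwise lower bound: for the exponential sum
`S(α) = Σ_{n=1}^N a_n e(nα)` and every `δ > 0`,
`|S(α)|² ≥ (1/δ)∫_{α−δ/2}^{α+δ/2}|S|² − ∫_{α−δ/2}^{α+δ/2}|S·S'|`. -/
theorem pointwise_lower_bound (N : ℕ) (a : ℕ → ℂ) (S S' : ℝ → ℂ)
    (hS : ∀ u : ℝ, S u = ∑ n ∈ Finset.Icc 1 N,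
      a n * Complex.exp (2 * Real.pi * Complex.I * n * u))
    (hS' : ∀ u : ℝ, S' u = 2 * Real.pi * Complex.I * ∑ n ∈ Finset.Icc 1 N,
      n * a n * Complex.exp (2 * Real.pi * Complex.I * n * u))
    (α δ : ℝ) (hδ : 0 < δ) :
    ‖S α‖ ^ 2 ≥
      (1 / δ) * (∫ u in (α - δ/2)..(α + δ/2), ‖S u‖ ^ 2)
        - ∫ u in (α - δ/2)..(α + δ/2), ‖S u * S' u‖ := by
  have hSd : ∀ t, HasDerivAt S (S' t) t := fun t => by
    rw [funext hS, hS']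
    exact hasDerivAt_sum_exp _ a t
  have hS'c : Continuous S' := by
    rw [funext hS']
    fun_prop
  have hSc : Continuous S := continuous_iff_continuousAt.2 fun t => (hSd t).continuousAt
  have hS2c : Continuous fun t => 2 * inner ℝ (S t) (S' t) := by fun_prop
  have hmean := integral_le_mul_add_half_integral_norm_deriv (α := α) hδ.le
    (fun t _ => (hSd t).norm_sq) (hS2c.intervalIntegrable _ _)
  have hderiv_le : ∫ t in (α - δ / 2)..(α + δ / 2), ‖2 * inner ℝ (S t) (S' t)‖ ≤
      2 * ∫ u in (α - δ/2)..(α + δ/2), ‖S u * S' u‖ := by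
    rw [← intervalIntegral.integral_const_mul]
    refine integral_mono_on (by linarith) (hS2c.norm.intervalIntegrable _ _)
      ((by fun_prop : Continuous fun t => 2 * ‖S t * S' t‖).intervalIntegrable _ _) fun t _ => ?_
    rw [norm_mul, norm_mul, Real.norm_two]
    exact mul_le_mul_of_nonneg_left (norm_inner_le_norm _ _) zero_le_two
  rw [ge_iff_le, one_div, ← div_eq_inv_mul, sub_le_iff_le_add, div_le_iff₀ hδ]
  linarith [mul_le_mul_of_nonneg_left hderiv_le (by positivity : 0 ≤ δ / 2)]
end

section
/- Let Q ≥ 1 and A > 1 with A/Q² < 1/2, and define m(Q,A) = { u ∈ [0,1] : there is no pair (a,q) with 1 ≤ q ≤ Q, gcd(a,q) = 1, and |u − a/q| ≤ A/Q² }. Then the Lebesgue measure of m(Q,A) is at most 1/A. -/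
/-!
By Dirichlet's theorem every `u ∈ [0,1]` lies within `1/(qQ)` of a reduced fraction
`a/q ∈ [0,1]` with `q ≤ Q`. If `u` is moreover farther than `A/Q²` from every such fraction,
then `A/Q² < 1/(qQ)`, i.e. `q ≤ N := ⌊Q/A⌋`, and `u` lies at distance between `A/Q²` and
`1/(qQ)` from `a/q`. Inside each of the `q` intervals `[a/q, (a+1)/q]` of `[0,1]` these points
form two intervals of length `1/(qQ) - A/Q²`, so the total measure is at most
`∑_{q ≤ N} (2/Q - 2qA/Q²) = 2N/Q - AN(N+1)/Q² ≤ 1/A`, the last step being `(Q - AN)² ≥ 0`.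
-/

open MeasureTheory Finset

lemma Rat.cast_mem_Icc_of_abs_sub_lt {u : ℝ} (hu : u ∈ Set.Icc 0 1) {x : ℚ}
    (hx : |u - x| < 1 / x.den) : (x : ℝ) ∈ Set.Icc 0 1 := by
  have hd : (0 : ℝ) < x.den := by positivity
  have hnum : (x : ℝ) * x.den = x.num := by exact_mod_cast Rat.mul_den_eq_num x
  have hx' : |u - x| * x.den < 1 := (lt_div_iff₀ hd).mp hx
  rw [← abs_of_pos hd, ← abs_mul, abs_lt, sub_mul, hnum] at hx'
  have h0 : 0 ≤ x.num := by
    have : (-1 : ℝ) < x.num := by nlinarith [hu.1]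
    have : -1 < x.num := by exact_mod_cast this
    omega
  have h1 : x.num ≤ x.den := by
    have : (x.num : ℝ) < x.den + 1 := by nlinarith [hu.2]
    have : x.num < x.den + 1 := by exact_mod_cast this
    omega
  exact ⟨by exact_mod_cast Rat.num_nonneg.mp h0, by exact_mod_cast Rat.num_le_denom_iff.mp h1⟩

theorem Real.exists_rat_mem_Icc_abs_sub_le {u Q : ℝ} (hu : u ∈ Set.Icc 0 1) (hQ : 1 ≤ Q) :
    ∃ x : ℚ, (x : ℝ) ∈ Set.Icc 0 1 ∧ (x.den : ℝ) ≤ Q ∧ |u - x| ≤ 1 / (x.den * Q) := by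
  obtain ⟨x, hux, hden⟩ := Real.exists_rat_abs_sub_le_and_den_le u (Nat.floor_pos.mpr hQ)
  have hd : (1 : ℝ) ≤ x.den := by exact_mod_cast x.den_pos
  have hQn : Q < ⌊Q⌋₊ + 1 := Nat.lt_floor_add_one Q
  have hnear : |u - x| ≤ 1 / (x.den * Q) := by
    refine hux.trans (one_div_le_one_div_of_le (by positivity) ?_)
    nlinarith
  refine ⟨x, Rat.cast_mem_Icc_of_abs_sub_lt hu (hux.trans_lt ?_), ?_, hnear⟩
  · refine one_div_lt_one_div_of_lt (by positivity) ?_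
    have : (1 : ℝ) ≤ ⌊Q⌋₊ := by exact_mod_cast Nat.floor_pos.mpr hQ
    nlinarith
  · exact (Nat.cast_le.mpr hden).trans (Nat.floor_le (by positivity))

def halfAnnuli (q : ℕ) (a : ℤ) (s r : ℝ) : Set ℝ :=
  Set.Icc (a / q + s) (a / q + r) ∪ Set.Icc ((a + 1) / q - r) ((a + 1) / q - s)

lemma volume_halfAnnuli_le (q : ℕ) (a : ℤ) (s r : ℝ) :
    volume (halfAnnuli q a s r) ≤ ENNReal.ofReal (2 * (r - s)) := by
  calc volume (halfAnnuli q a s r)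
      ≤ volume (Set.Icc (a / q + s) (a / q + r : ℝ))
        + volume (Set.Icc ((a + 1) / q - r) ((a + 1) / q - s : ℝ)) := measure_union_le _ _
    _ = ENNReal.ofReal (2 * (r - s)) := by
      rw [Real.volume_Icc, Real.volume_Icc, ENNReal.ofReal_mul zero_le_two, ENNReal.ofReal_ofNat,
        two_mul]
      congr 2 <;> ring

lemma volume_biUnion_halfAnnuli_le (q : ℕ) (s r : ℝ) :
    volume (⋃ a ∈ Ico (0 : ℤ) q, halfAnnuli q a s r) ≤ ENNReal.ofReal (2 * q * (r - s)) := by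
  calc volume (⋃ a ∈ Ico (0 : ℤ) q, halfAnnuli q a s r)
      ≤ ∑ a ∈ Ico (0 : ℤ) q, volume (halfAnnuli q a s r) := measure_biUnion_finset_le _ _
    _ ≤ ∑ a ∈ Ico (0 : ℤ) q, ENNReal.ofReal (2 * (r - s)) :=
      sum_le_sum fun a _ => volume_halfAnnuli_le q a s r
    _ = ENNReal.ofReal (2 * q * (r - s)) := by
      rw [sum_const, Int.card_Ico, sub_zero, Int.toNat_natCast, nsmul_eq_mul, mul_comm 2 (q : ℝ),
        mul_assoc, ENNReal.ofReal_mul (Nat.cast_nonneg q), ENNReal.ofReal_natCast]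

lemma exists_mem_halfAnnuli {u s r : ℝ} (hu : u ∈ Set.Icc 0 1) (hs : 0 ≤ s) {x : ℚ}
    (hx : (x : ℝ) ∈ Set.Icc 0 1) (hfar : s < |u - x|) (hnear : |u - x| ≤ r) :
    ∃ a ∈ Ico (0 : ℤ) x.den, u ∈ halfAnnuli x.den a s r := by
  have hd : (0 : ℝ) < x.den := by exact_mod_cast x.den_pos
  rw [Rat.cast_def] at hx hfar hnear
  have hne : u ≠ x.num / x.den := by
    rintro rfl
    rw [sub_self, abs_zero] at hfar
    linarith
  rcases lt_or_gt_of_ne hne with hlt | hgt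
  · rw [abs_of_neg (sub_neg.mpr hlt)] at hfar hnear
    have hnum_pos : (0 : ℝ) < x.num := by
      have := hu.1.trans_lt hlt
      rwa [div_pos_iff_of_pos_right hd] at this
    have hnum_le : (x.num : ℝ) ≤ x.den := (div_le_one hd).mp hx.2
    refine ⟨x.num - 1, mem_Ico.mpr ⟨?_, ?_⟩, Or.inr ?_⟩
    · have : 0 < x.num := by exact_mod_cast hnum_pos
      omega
    · have : x.num ≤ x.den := by exact_mod_cast hnum_le
      omega
    · push_cast
      rw [sub_add_cancel]
      constructor <;> linarith
  · rw [abs_of_pos (sub_pos.mpr hgt)] at hfar hnear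
    have hnum_lt : (x.num : ℝ) < x.den := (div_lt_one hd).mp (hgt.trans_le hu.2)
    have hnum_nonneg : (0 : ℝ) ≤ x.num := by
      have := hx.1
      rwa [le_div_iff₀ hd, zero_mul] at this
    refine ⟨x.num, mem_Ico.mpr ⟨by exact_mod_cast hnum_nonneg, by exact_mod_cast hnum_lt⟩,
      Or.inl ⟨by linarith, by linarith⟩⟩

lemma div_sq_le_one_div_mul_iff {Q A q : ℝ} (hQ : 0 < Q) (hA : 0 < A) (hq : 0 < q) :
    A / Q ^ 2 ≤ 1 / (q * Q) ↔ q ≤ Q / A := by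
  rw [div_le_div_iff₀ (by positivity) (by positivity), le_div_iff₀ hA]
  constructor <;> intro h <;> nlinarith

lemma mem_biUnion_halfAnnuli_of_forall_lt_abs_sub {Q A u : ℝ} (hQ : 1 ≤ Q) (hA : 0 < A)
    (hu : u ∈ Set.Icc 0 1) (hfar : ∀ x : ℚ, (x.den : ℝ) ≤ Q → A / Q ^ 2 < |u - x|) :
    u ∈ ⋃ q ∈ Icc 1 ⌊Q / A⌋₊, ⋃ a ∈ Ico (0 : ℤ) q, halfAnnuli q a (A / Q ^ 2) (1 / (q * Q)) := by
  obtain ⟨x, hx, hden, hnear⟩ := Real.exists_rat_mem_Icc_abs_sub_le hu hQ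
  have hfar_x := hfar x hden
  have hden_mem : x.den ∈ Icc 1 ⌊Q / A⌋₊ := by
    refine mem_Icc.mpr ⟨x.den_pos, Nat.le_floor ?_⟩
    exact (div_sq_le_one_div_mul_iff (by linarith) hA (by exact_mod_cast x.den_pos)).mp
      (hfar_x.trans_le hnear).le
  obtain ⟨a, ha, hua⟩ := exists_mem_halfAnnuli hu (by positivity) hx hfar_x hnear
  exact Set.mem_biUnion hden_mem (Set.mem_biUnion ha hua)

lemma sum_Icc_one_natCast (N : ℕ) : ∑ q ∈ Icc 1 N, (q : ℝ) = N * (N + 1) / 2 := by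
  induction N with
  | zero => simp
  | succ n ih =>
    rw [sum_Icc_succ_top (by omega), ih]
    push_cast
    ring

lemma sum_Icc_mul_sub_le_inv {Q A : ℝ} (hQ : 0 < Q) (hA : 0 < A) (N : ℕ) :
    ∑ q ∈ Icc 1 N, 2 * q * (1 / (q * Q) - A / Q ^ 2) ≤ 1 / A := by
  have hterm : ∀ q ∈ Icc 1 N,
      2 * (q : ℝ) * (1 / (q * Q) - A / Q ^ 2) = 2 / Q - 2 * A / Q ^ 2 * q := by
    intro q hq
    have : (q : ℝ) ≠ 0 := by have := (mem_Icc.mp hq).1; positivity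
    field_simp
  have hsum : N * (2 / Q) - 2 * A / Q ^ 2 * (N * (N + 1) / 2)
      = 1 / A - ((Q - A * N) ^ 2 + A ^ 2 * N) / (A * Q ^ 2) := by
    field_simp
    ring
  rw [sum_congr rfl hterm, sum_sub_distrib, sum_const, Nat.card_Icc, ← mul_sum,
    sum_Icc_one_natCast, nsmul_eq_mul, Nat.add_sub_cancel, hsum, sub_le_self_iff]
  positivity

theorem measure_far_from_fractions_general (Q A : ℝ) (hQ : 1 ≤ Q) (hA : 1 < A) :
    volume {u : ℝ | u ∈ Set.Icc (0:ℝ) 1 ∧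
        ¬ ∃ a q : ℤ, 1 ≤ q ∧ (q : ℝ) ≤ Q ∧ Int.gcd a q = 1 ∧
          |u - (a : ℝ) / q| ≤ A / Q ^ 2} ≤ ENNReal.ofReal (1 / A) := by
  have hQ0 : 0 < Q := by linarith
  have hA0 : 0 < A := by linarith
  set N := ⌊Q / A⌋₊
  have hnonneg : ∀ q ∈ Icc 1 N, 0 ≤ 2 * (q : ℝ) * (1 / (q * Q) - A / Q ^ 2) := fun q hq =>
    have hq := mem_Icc.mp hq
    mul_nonneg (by positivity) <| sub_nonneg.mpr <|
      (div_sq_le_one_div_mul_iff hQ0 hA0 (by exact_mod_cast hq.1)).mpr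
        ((Nat.le_floor_iff (by positivity)).mp hq.2)
  calc _ ≤ volume (⋃ q ∈ Icc 1 N, ⋃ a ∈ Ico (0 : ℤ) q,
          halfAnnuli q a (A / Q ^ 2) (1 / (q * Q))) := by
        refine measure_mono fun u ⟨hu, hfar⟩ => ?_
        refine mem_biUnion_halfAnnuli_of_forall_lt_abs_sub hQ hA0 hu fun x hden => ?_
        exact not_le.mp fun h => hfar ⟨x.num, x.den, by exact_mod_cast x.den_pos,
          by exact_mod_cast hden, x.reduced, by simpa [Rat.cast_def] using h⟩
    _ ≤ ∑ q ∈ Icc 1 N, ENNReal.ofReal (2 * q * (1 / (q * Q) - A / Q ^ 2)) :=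
      (measure_biUnion_finset_le _ _).trans
        (sum_le_sum fun q _ => volume_biUnion_halfAnnuli_le q _ _)
    _ = ENNReal.ofReal (∑ q ∈ Icc 1 N, 2 * q * (1 / (q * Q) - A / Q ^ 2)) :=
      (ENNReal.ofReal_sum_of_nonneg hnonneg).symm
    _ ≤ ENNReal.ofReal (1 / A) := ENNReal.ofReal_le_ofReal (sum_Icc_mul_sub_le_inv hQ0 hA0 N)

/-- The set of points of `[0,1]` at distance greater than `A/Q²` from every
reduced fraction with denominator at most `Q` has Lebesgue measure at most `1/A`. -/
theorem measure_far_from_fractions (Q A : ℝ) (hQ : 1 ≤ Q) (hA : 1 < A)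
    (hAQ : A / Q ^ 2 < 1 / 2) :
    volume {u : ℝ | u ∈ Set.Icc (0:ℝ) 1 ∧
        ¬ ∃ a q : ℤ, 1 ≤ q ∧ (q : ℝ) ≤ Q ∧ Int.gcd a q = 1 ∧
          |u - (a : ℝ) / q| ≤ A / Q ^ 2} ≤ ENNReal.ofReal (1 / A) :=
  measure_far_from_fractions_general Q A hQ hA
end

section
/- Let a_1,…,a_N be independent random variables, each uniform on {1,−1}, let S(α) = Σ_{n=1}^N a_n e(nα), and let 0 < x ≤ 1. Then with probability at least 1 − √(8x), every Lebesgue-measurable set 𝔪 ⊆ [0,1] of measure x satisfies ∫_𝔪 |S(u)|² du ≤ (1/2)·∫_0^1 |S(u)|² du. -/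
/-!
On the event that every `a_n = ±1` we have `∫₀¹ |S|² = ∑ a_n² = N`, and orthogonality of the
characters `e(ku)` on `[0,1]` gives `∫₀¹ |S|⁴ = ∑_{m+p=n+q} a_m a_n a_p a_q`. A product of four
independent signs has mean zero unless its indices pair up, and only the pairings `m = n, p = q`
and `m = q, n = p` are compatible with `m + p = n + q`, so `𝔼 ∫₀¹ |S|⁴ ≤ 2N²`. By Markov,
`4x ∫₀¹ |S|⁴ < N²` outside an event of probability at most `8x`, and there Cauchy–Schwarz gives
`(∫_𝔪 |S|²)² ≤ x ∫₀¹ |S|⁴ < (N/2)²`. Finally `1 - √(8x) ≤ 1 - 8x` whenever the left side is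
positive.
-/

open MeasureTheory ProbabilityTheory Real Complex ComplexConjugate

noncomputable def fourierMode (k : ℤ) (u : ℝ) : ℂ := Complex.exp (2 * π * I * k * u)

theorem continuous_fourierMode (k : ℤ) : Continuous (fourierMode k) := by
  unfold fourierMode; fun_prop

theorem fourierMode_add (j k : ℤ) (u : ℝ) :
    fourierMode (j + k) u = fourierMode j u * fourierMode k u := by
  rw [fourierMode, fourierMode, fourierMode, ← Complex.exp_add]
  push_cast
  ring_nf

theorem conj_fourierMode (k : ℤ) (u : ℝ) : conj (fourierMode k u) = fourierMode (-k) u := by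
  rw [fourierMode, fourierMode, ← Complex.exp_conj]
  simp [map_ofNat]

theorem integral_fourierMode (k : ℤ) :
    ∫ u in (0:ℝ)..1, fourierMode k u = if k = 0 then 1 else 0 := by
  split_ifs with hk
  · simp [hk, fourierMode]
  have hc : 2 * π * I * k ≠ 0 := by simp [Real.pi_ne_zero, I_ne_zero, hk]
  have hperiod : Complex.exp (2 * π * I * k) = 1 := by
    rw [show 2 * π * I * k = k * (2 * π * I) by ring]
    exact exp_int_mul_two_pi_mul_I k
  simp only [fourierMode]
  rw [integral_exp_mul_complex hc]
  simp [hperiod]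

theorem integral_sum_mul_fourierMode {ι : Type*} [Fintype ι] (c : ι → ℂ) (k : ι → ℤ) :
    ∫ u in (0:ℝ)..1, ∑ i, c i * fourierMode (k i) u = ∑ i, if k i = 0 then c i else 0 := by
  have hint (i : ι) : IntervalIntegrable (fun u => c i * fourierMode (k i) u) volume 0 1 :=
    (continuous_const.mul (continuous_fourierMode (k i))).intervalIntegrable _ _
  rw [intervalIntegral.integral_finsetSum fun i _ => hint i]
  simp [intervalIntegral.integral_const_mul, integral_fourierMode]

noncomputable def expSum {N : ℕ} (b : Fin N → ℝ) (u : ℝ) : ℂ :=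
  ∑ n : Fin N, (b n : ℂ) * Complex.exp (2 * π * I * ((n : ℕ) + 1) * u)

section expSum

variable {N : ℕ} (b : Fin N → ℝ)

theorem expSum_eq_sum_fourierMode (u : ℝ) :
    expSum b u = ∑ n, (b n : ℂ) * fourierMode ((n : ℕ) + 1) u := by
  simp [expSum, fourierMode]

theorem continuous_expSum : Continuous (expSum b) := by
  unfold expSum; fun_prop

theorem norm_expSum_sq (u : ℝ) :
    ((‖expSum b u‖ ^ 2 : ℝ) : ℂ) =
      ∑ mn : Fin N × Fin N,
        ((b mn.1 * b mn.2 : ℝ) : ℂ) * fourierMode ((mn.1 : ℕ) - (mn.2 : ℕ) : ℤ) u := by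
  rw [Complex.ofReal_pow, ← Complex.mul_conj', expSum_eq_sum_fourierMode, map_sum,
    Finset.sum_mul_sum, ← Finset.sum_product']
  refine Finset.sum_congr rfl fun mn _ => ?_
  rw [map_mul, conj_fourierMode, Complex.conj_ofReal, mul_mul_mul_comm, ← fourierMode_add]
  push_cast
  ring_nf

theorem integral_norm_expSum_sq : ∫ u in (0:ℝ)..1, ‖expSum b u‖ ^ 2 = ∑ n, b n ^ 2 := by
  have h := congrArg (fun f => ∫ u in (0:ℝ)..1, f u) (funext (norm_expSum_sq b))
  simp only [intervalIntegral.integral_ofReal, integral_sum_mul_fourierMode] at h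
  rw [Fintype.sum_prod_type] at h
  simp only [sub_eq_zero, Nat.cast_inj, Fin.val_inj, Finset.sum_ite_eq, Finset.mem_univ,
    if_true, ← sq] at h
  exact_mod_cast h

theorem integral_norm_expSum_pow_four :
    ∫ u in (0:ℝ)..1, ‖expSum b u‖ ^ 4 =
      ∑ m : Fin N, ∑ n : Fin N, ∑ p : Fin N, ∑ q : Fin N,
        if (m : ℕ) + p = n + q then b m * b n * b p * b q else 0 := by
  have hsq (u : ℝ) : ((‖expSum b u‖ ^ 4 : ℝ) : ℂ) =
      ∑ i : (Fin N × Fin N) × (Fin N × Fin N),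
        ((b i.1.1 * b i.1.2 * b i.2.1 * b i.2.2 : ℝ) : ℂ) *
          fourierMode (((i.1.1 : ℕ) - (i.1.2 : ℕ) : ℤ) + ((i.2.1 : ℕ) - (i.2.2 : ℕ) : ℤ)) u := by
    rw [show ‖expSum b u‖ ^ 4 = (‖expSum b u‖ ^ 2) ^ 2 by ring, Complex.ofReal_pow,
      norm_expSum_sq, sq, Finset.sum_mul_sum, ← Finset.sum_product']
    refine Finset.sum_congr rfl fun i _ => ?_
    rw [fourierMode_add]
    push_cast
    ring
  have h := congrArg (fun f => ∫ u in (0:ℝ)..1, f u) (funext hsq)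
  simp only [intervalIntegral.integral_ofReal, integral_sum_mul_fourierMode] at h
  have hfreq (m n p q : Fin N) :
      ((m : ℕ) - (n : ℕ) : ℤ) + ((p : ℕ) - (q : ℕ) : ℤ) = 0 ↔ (m : ℕ) + p = n + q := by
    omega
  simp only [Fintype.sum_prod_type, hfreq] at h
  apply Complex.ofReal_injective
  simp only [h, Complex.ofReal_sum, apply_ite ((↑) : ℝ → ℂ), Complex.ofReal_zero]

end expSum

theorem sq_setIntegral_le_measureReal_mul {α : Type*} [MeasurableSpace α] {μ : Measure α}
    {s : Set α} {f : α → ℝ} (hs : μ s ≠ ⊤) (hf : IntegrableOn f s μ)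
    (hf2 : IntegrableOn (fun y => f y ^ 2) s μ) :
    (∫ y in s, f y ∂μ) ^ 2 ≤ μ.real s * ∫ y in s, f y ^ 2 ∂μ := by
  rcases (measureReal_nonneg (μ := μ) (s := s)).eq_or_lt with hm0 | hm0
  · rw [eq_comm, measureReal_eq_zero_iff hs] at hm0
    simp [Measure.restrict_eq_zero.mpr hm0]
  set m := μ.real s
  set I := ∫ y in s, f y ∂μ
  have hvar : ∫ y in s, (m * f y - I) ^ 2 ∂μ = m * (m * ∫ y in s, f y ^ 2 ∂μ - I ^ 2) := by
    have hexpand (y : α) : (m * f y - I) ^ 2 = (m ^ 2 * f y ^ 2 - 2 * m * I * f y) + I ^ 2 := by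
      ring
    have h1 : IntegrableOn (fun y => m ^ 2 * f y ^ 2) s μ := hf2.const_mul _
    have h2 : IntegrableOn (fun y => 2 * m * I * f y) s μ := hf.const_mul _
    have h12 : IntegrableOn (fun y => m ^ 2 * f y ^ 2 - 2 * m * I * f y) s μ := h1.sub h2
    simp_rw [hexpand]
    rw [integral_add h12 (integrableOn_const hs), integral_sub h1 h2, integral_const_mul,
      integral_const_mul, setIntegral_const, smul_eq_mul]
    ring
  nlinarith [hvar ▸ integral_nonneg fun y => sq_nonneg (m * f y - I)]

theorem setIntegral_le_half_of_four_mul_le {F : ℝ → ℝ} (hF : Continuous F) (hF0 : ∀ u, 0 ≤ F u)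
    {𝔪 : Set ℝ} (h𝔪 : MeasurableSet 𝔪) (hsub : 𝔪 ⊆ Set.Icc 0 1)
    (h : 4 * volume.real 𝔪 * ∫ u in (0:ℝ)..1, F u ^ 2 ≤ (∫ u in (0:ℝ)..1, F u) ^ 2) :
    ∫ u in 𝔪, F u ≤ 1 / 2 * ∫ u in (0:ℝ)..1, F u := by
  have hIcc (g : ℝ → ℝ) : ∫ u in (0:ℝ)..1, g u = ∫ u in Set.Icc 0 1, g u := by
    rw [intervalIntegral.integral_of_le zero_le_one, integral_Icc_eq_integral_Ioc]
  have hF2 : Continuous fun u => F u ^ 2 := hF.pow 2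
  have hfin : volume 𝔪 ≠ ⊤ := (measure_mono hsub).trans_lt measure_Icc_lt_top |>.ne
  have hcs := sq_setIntegral_le_measureReal_mul hfin (hF.integrableOn_Icc.mono_set hsub)
    (hF2.integrableOn_Icc.mono_set hsub)
  have hmono : ∫ u in 𝔪, F u ^ 2 ≤ ∫ u in (0:ℝ)..1, F u ^ 2 := by
    rw [hIcc]
    exact setIntegral_mono_set hF2.integrableOn_Icc (ae_of_all _ fun u => sq_nonneg _)
      (ae_of_all _ hsub)
  have hint_nonneg : 0 ≤ ∫ u in (0:ℝ)..1, F u :=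
    intervalIntegral.integral_nonneg zero_le_one fun u _ => hF0 u
  refine (pow_le_pow_iff_left₀ (setIntegral_nonneg h𝔪 fun u _ => hF0 u) (by positivity)
    two_ne_zero).mp ?_
  nlinarith [mul_le_mul_of_nonneg_left hmono (measureReal_nonneg (μ := volume) (s := 𝔪))]

theorem setIntegral_norm_expSum_sq_le_half {N : ℕ} {b : Fin N → ℝ}
    (hb : ∀ n, b n = 1 ∨ b n = -1) {x : ℝ} (hx : 0 < x)
    (hG : ∫ u in (0:ℝ)..1, ‖expSum b u‖ ^ 4 ≤ (N : ℝ) ^ 2 / (4 * x))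
    {𝔪 : Set ℝ} (h𝔪 : MeasurableSet 𝔪) (hsub : 𝔪 ⊆ Set.Icc 0 1)
    (hvol : volume 𝔪 = ENNReal.ofReal x) :
    ∫ u in 𝔪, ‖expSum b u‖ ^ 2 ≤ 1 / 2 * ∫ u in (0:ℝ)..1, ‖expSum b u‖ ^ 2 := by
  have hsq (n : Fin N) : b n ^ 2 = 1 := by rcases hb n with h | h <;> simp [h]
  refine setIntegral_le_half_of_four_mul_le (F := fun u => ‖expSum b u‖ ^ 2)
    ((continuous_expSum b).norm.pow 2) (fun u => by positivity) h𝔪 hsub ?_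
  simp only [← pow_mul, integral_norm_expSum_sq, hsq, measureReal_def, hvol,
    ENNReal.toReal_ofReal hx.le]
  rw [le_div_iff₀' (by positivity)] at hG
  simpa using hG

theorem ENNReal.ofReal_one_sub_sqrt_le {y : ℝ} (hy : 0 ≤ y) :
    ENNReal.ofReal (1 - √y) ≤ 1 - ENNReal.ofReal y := by
  rw [← ENNReal.ofReal_one, ← ENNReal.ofReal_sub _ hy, ENNReal.ofReal_le_ofReal_iff']
  have hsq := Real.sq_sqrt hy
  rcases le_total y 1 with hy1 | hy1
  · left; nlinarith [Real.sqrt_nonneg y, Real.sqrt_le_one.mpr hy1]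
  · right; nlinarith [Real.one_le_sqrt.mpr hy1]

def IsRademacher {Ω : Type*} [MeasurableSpace Ω] (X : Ω → ℝ) (μ : Measure Ω) : Prop :=
  μ {ω | X ω = 1} = 1 / 2 ∧ μ {ω | X ω = -1} = 1 / 2

namespace IsRademacher

variable {Ω : Type*} [MeasurableSpace Ω] {μ : Measure Ω} [IsProbabilityMeasure μ] {X : Ω → ℝ}

theorem ae_eq_one_or_eq_neg_one (hX : IsRademacher X μ) (hXm : Measurable X) :
    ∀ᵐ ω ∂μ, X ω = 1 ∨ X ω = -1 := by
  have hdisj : Disjoint {ω | X ω = 1} {ω | X ω = -1} :=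
    Set.disjoint_left.mpr fun ω (h1 : X ω = 1) (h2 : X ω = -1) => by linarith
  have hunion : μ ({ω | X ω = 1} ∪ {ω | X ω = -1}) = 1 := by
    rw [measure_union hdisj (hXm (measurableSet_singleton _)), hX.1, hX.2, ENNReal.add_halves]
  rw [ae_iff_measure_eq (by measurability), measure_univ]
  exact hunion

theorem integral_eq_zero (hX : IsRademacher X μ) (hXm : Measurable X) : ∫ ω, X ω ∂μ = 0 := by
  have hA : MeasurableSet {ω | X ω = 1} := hXm (measurableSet_singleton 1)
  have hB : MeasurableSet {ω | X ω = -1} := hXm (measurableSet_singleton (-1))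
  have hcongr : X =ᵐ[μ] fun ω =>
      {ω | X ω = 1}.indicator (fun _ => 1) ω + {ω | X ω = -1}.indicator (fun _ => -1) ω := by
    filter_upwards [hX.ae_eq_one_or_eq_neg_one hXm] with ω h
    rcases h with h | h <;> norm_num [Set.indicator_apply, h]
  rw [integral_congr_ae hcongr, integral_add ((integrable_const _).indicator hA)
    ((integrable_const _).indicator hB), integral_indicator_const _ hA,
    integral_indicator_const _ hB, measureReal_def, measureReal_def, hX.1, hX.2]
  norm_num

end IsRademacher

section Independence

variable {Ω ι : Type*} [MeasurableSpace Ω] {μ : Measure Ω} {a : ι → Ω → ℝ}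

theorem ProbabilityTheory.iIndepFun.integral_mul_mul_mul_eq_zero (hind : iIndepFun a μ)
    (hmeas : ∀ i, Measurable (a i)) {i j k l : ι} (hi : ∫ ω, a i ω ∂μ = 0)
    (hj : j ≠ i) (hk : k ≠ i) (hl : l ≠ i) :
    ∫ ω, a i ω * (a j ω * a k ω * a l ω) ∂μ = 0 := by
  classical
  have hdisj : Disjoint ({i} : Finset ι) {j, k, l} := by simp [hj.symm, hk.symm, hl.symm]
  have hindep : IndepFun (a i) (fun ω => a j ω * a k ω * a l ω) μ :=
    (hind.indepFun_finset _ _ hdisj hmeas).comp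
      (φ := fun v : ({i} : Finset ι) → ℝ => v ⟨i, by simp⟩)
      (ψ := fun v : ({j, k, l} : Finset ι) → ℝ =>
        v ⟨j, by simp⟩ * v ⟨k, by simp⟩ * v ⟨l, by simp⟩)
      (by fun_prop) (by fun_prop)
  rw [hindep.integral_fun_mul_eq_mul_integral (hmeas i).aestronglyMeasurable
    (by fun_prop : Measurable fun ω => a j ω * a k ω * a l ω).aestronglyMeasurable, hi, zero_mul]

end Independence

section RandomSigns

variable {Ω ι : Type*} [MeasurableSpace Ω] {μ : Measure Ω} [IsProbabilityMeasure μ]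
  {a : ι → Ω → ℝ}

theorem ae_norm_mul_mul_mul_le_one (hmeas : ∀ i, Measurable (a i))
    (hrad : ∀ i, IsRademacher (a i) μ) (i j k l : ι) :
    ∀ᵐ ω ∂μ, ‖a i ω * a j ω * a k ω * a l ω‖ ≤ 1 := by
  have hsign (i : ι) := (hrad i).ae_eq_one_or_eq_neg_one (hmeas i)
  filter_upwards [hsign i, hsign j, hsign k, hsign l] with ω hi hj hk hl
  have habs {t : ℝ} (ht : t = 1 ∨ t = -1) : |t| = 1 := by rcases ht with rfl | rfl <;> simp
  simp [habs hi, habs hj, habs hk, habs hl]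

theorem integrable_mul_mul_mul (hmeas : ∀ i, Measurable (a i))
    (hrad : ∀ i, IsRademacher (a i) μ) (i j k l : ι) :
    Integrable (fun ω => a i ω * a j ω * a k ω * a l ω) μ :=
  .of_bound (by fun_prop) 1 (ae_norm_mul_mul_mul_le_one hmeas hrad i j k l)

theorem integral_mul_mul_mul_le_one (hmeas : ∀ i, Measurable (a i))
    (hrad : ∀ i, IsRademacher (a i) μ) (i j k l : ι) :
    ∫ ω, a i ω * a j ω * a k ω * a l ω ∂μ ≤ 1 := by
  simpa using (le_abs_self _).trans
    (norm_integral_le_of_norm_le_const (ae_norm_mul_mul_mul_le_one hmeas hrad i j k l))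

end RandomSigns

section RandomExpSum

variable {Ω : Type*} [MeasurableSpace Ω] {μ : Measure Ω} [IsProbabilityMeasure μ] {N : ℕ}
  {a : Fin N → Ω → ℝ}

theorem integral_mul_mul_mul_le_of_add_eq_add (hind : iIndepFun a μ) (hmeas : ∀ n, Measurable (a n))
    (hrad : ∀ n, IsRademacher (a n) μ) {m n p q : Fin N} (h : (m : ℕ) + p = n + q) :
    ∫ ω, a m ω * a n ω * a p ω * a q ω ∂μ ≤
      (if m = n ∧ p = q then 1 else 0) + (if m = q ∧ n = p then 1 else 0) := by
  by_cases hpair : (m = n ∧ p = q) ∨ (m = q ∧ n = p)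
  · refine (integral_mul_mul_mul_le_one hmeas hrad m n p q).trans ?_
    rcases hpair with ⟨rfl, rfl⟩ | ⟨rfl, rfl⟩ <;> simp only [and_self, if_true] <;> split_ifs <;>
      norm_num
  have hmean (i : Fin N) := (hrad i).integral_eq_zero (hmeas i)
  have hlonely : (n ≠ m ∧ p ≠ m ∧ q ≠ m) ∨ (m ≠ n ∧ p ≠ n ∧ q ≠ n) := by
    simp only [Fin.ext_iff] at hpair ⊢
    omega
  have hzero : ∫ ω, a m ω * a n ω * a p ω * a q ω ∂μ = 0 := by
    rcases hlonely with ⟨hn, hp, hq⟩ | ⟨hm, hp, hq⟩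
    · simpa only [mul_assoc] using
        hind.integral_mul_mul_mul_eq_zero hmeas (hmean m) hn hp hq
    · simpa only [mul_assoc, mul_left_comm] using
        hind.integral_mul_mul_mul_eq_zero hmeas (hmean n) hm hp hq
  rw [hzero]
  positivity

theorem integrable_integral_norm_expSum_pow_four (hmeas : ∀ n, Measurable (a n))
    (hrad : ∀ n, IsRademacher (a n) μ) :
    Integrable (fun ω => ∫ u in (0:ℝ)..1, ‖expSum (fun n => a n ω) u‖ ^ 4) μ := by
  simp only [integral_norm_expSum_pow_four]
  refine integrable_finsetSum _ fun m _ => integrable_finsetSum _ fun n _ =>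
    integrable_finsetSum _ fun p _ => integrable_finsetSum _ fun q _ => ?_
  split_ifs
  · exact integrable_mul_mul_mul hmeas hrad m n p q
  · exact integrable_zero _ _ _

theorem integral_integral_norm_expSum_pow_four_le (hind : iIndepFun a μ)
    (hmeas : ∀ n, Measurable (a n)) (hrad : ∀ n, IsRademacher (a n) μ) :
    ∫ ω, (∫ u in (0:ℝ)..1, ‖expSum (fun n => a n ω) u‖ ^ 4) ∂μ ≤ 2 * N ^ 2 := by
  have hint (m n p q : Fin N) : Integrable (fun ω =>
      if (m : ℕ) + p = n + q then a m ω * a n ω * a p ω * a q ω else 0) μ := by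
    split_ifs
    · exact integrable_mul_mul_mul hmeas hrad m n p q
    · exact integrable_zero _ _ _
  have hterm (m n p q : Fin N) :
      ∫ ω, (if (m : ℕ) + p = n + q then a m ω * a n ω * a p ω * a q ω else 0) ∂μ ≤
        (if m = n ∧ p = q then 1 else 0) + (if m = q ∧ n = p then 1 else 0) := by
    by_cases h : (m : ℕ) + p = n + q
    · simpa only [h, if_true] using integral_mul_mul_mul_le_of_add_eq_add hind hmeas hrad h
    · simp only [h, if_false, integral_zero]
      positivity
  simp only [integral_norm_expSum_pow_four]
  have hint3 (m n p : Fin N) := integrable_finsetSum Finset.univ fun q _ => hint m n p q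
  have hint2 (m n : Fin N) := integrable_finsetSum Finset.univ fun p _ => hint3 m n p
  have hint1 (m : Fin N) := integrable_finsetSum Finset.univ fun n _ => hint2 m n
  rw [integral_finsetSum _ fun m _ => hint1 m]
  simp_rw [integral_finsetSum _ fun _ _ => hint2 _ _,
    integral_finsetSum _ fun _ _ => hint3 _ _ _, integral_finsetSum _ fun _ _ => hint _ _ _ _]
  calc _ ≤ ∑ m : Fin N, ∑ n : Fin N, ∑ p : Fin N, ∑ q : Fin N,
        ((if m = n ∧ p = q then (1 : ℝ) else 0) + (if m = q ∧ n = p then 1 else 0)) := by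
        gcongr with m _ n _ p _ q _
        exact hterm m n p q
    _ = 2 * N ^ 2 := by
      simp [Finset.sum_add_distrib, ite_and, Finset.sum_ite_eq]
      ring

theorem measure_le_integral_norm_expSum_pow_four_le (hind : iIndepFun a μ)
    (hmeas : ∀ n, Measurable (a n)) (hrad : ∀ n, IsRademacher (a n) μ) (hN : 0 < N)
    {x : ℝ} (hx : 0 < x) :
    μ {ω | (N : ℝ) ^ 2 / (4 * x) ≤ ∫ u in (0:ℝ)..1, ‖expSum (fun n => a n ω) u‖ ^ 4} ≤
      ENNReal.ofReal (8 * x) := by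
  have hc : 0 < (N : ℝ) ^ 2 / (4 * x) := by positivity
  have hmarkov := mul_meas_ge_le_integral_of_nonneg
    (ae_of_all _ fun ω => intervalIntegral.integral_nonneg zero_le_one fun u _ => by positivity)
    (integrable_integral_norm_expSum_pow_four hmeas hrad) ((N : ℝ) ^ 2 / (4 * x))
  have hmoment := integral_integral_norm_expSum_pow_four_le hind hmeas hrad
  rw [← ofReal_measureReal]
  refine ENNReal.ofReal_le_ofReal ((le_div_iff₀' hc).mpr (hmarkov.trans hmoment) |>.trans_eq ?_)
  field_simp
  ring

end RandomExpSum

theorem prob_M_le_half_general (N : ℕ) (hN : 1 ≤ N)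
    {Ω : Type*} [MeasureSpace Ω] [IsProbabilityMeasure (ℙ : Measure Ω)]
    (a : Fin N → Ω → ℝ) (hmeas : ∀ n, Measurable (a n))
    (hindep : iIndepFun a ℙ)
    (hdist : ∀ n, ℙ {ω | a n ω = 1} = 1/2 ∧ ℙ {ω | a n ω = -1} = 1/2)
    (x : ℝ) (hx : 0 < x) :
    ℙ {ω | ∀ 𝔪 : Set ℝ, MeasurableSet 𝔪 → 𝔪 ⊆ Set.Icc (0:ℝ) 1 →
        volume 𝔪 = ENNReal.ofReal x →
        (∫ u in 𝔪, ‖∑ n : Fin N,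
          (a n ω : ℂ) * Complex.exp (2 * Real.pi * Complex.I * ((n : ℕ) + 1) * u)‖ ^ 2) ≤
        (1 / 2) * ∫ u in (0:ℝ)..1, ‖∑ n : Fin N,
          (a n ω : ℂ) * Complex.exp (2 * Real.pi * Complex.I * ((n : ℕ) + 1) * u)‖ ^ 2}
      ≥ ENNReal.ofReal (1 - Real.sqrt (8 * x)) := by
  have hrad : ∀ n, IsRademacher (a n) ℙ := hdist
  set bad := {ω | (N : ℝ) ^ 2 / (4 * x) ≤
    ∫ u in (0:ℝ)..1, ‖expSum (fun n => a n ω) u‖ ^ 4}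
  have hbad : ℙ bad ≤ ENNReal.ofReal (8 * x) :=
    measure_le_integral_norm_expSum_pow_four_le hindep hmeas hrad hN hx
  have hbad_meas : NullMeasurableSet bad ℙ := nullMeasurableSet_le aemeasurable_const
    (integrable_integral_norm_expSum_pow_four hmeas hrad).aemeasurable
  refine le_trans (b := ℙ badᶜ) ?_ (measure_mono_ae ?_)
  · calc ENNReal.ofReal (1 - √(8 * x))
        ≤ 1 - ENNReal.ofReal (8 * x) := ENNReal.ofReal_one_sub_sqrt_le (by positivity)
      _ ≤ 1 - ℙ bad := tsub_le_tsub_left hbad 1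
      _ = ℙ badᶜ := (prob_compl_eq_one_sub₀ hbad_meas).symm
  · filter_upwards [ae_all_iff.2 fun n => (hrad n).ae_eq_one_or_eq_neg_one (hmeas n)]
      with ω hsign (hω : ω ∉ bad) 𝔪 h𝔪 hsub hvol
    exact setIntegral_norm_expSum_sq_le_half hsign hx (not_le.mp hω).le h𝔪 hsub hvol

/-- For independent random signs `a_1,…,a_N` and `0 < x ≤ 1`: with probability at
least `1 − √(8x)`, every measurable `𝔪 ⊆ [0,1]` of measure `x` satisfies
`∫_𝔪 |S|² ≤ (1/2)∫_0^1 |S|²`. -/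
theorem prob_M_le_half (N : ℕ) (hN : 1 ≤ N)
    {Ω : Type*} [MeasureSpace Ω] [IsProbabilityMeasure (ℙ : Measure Ω)]
    (a : Fin N → Ω → ℝ) (hmeas : ∀ n, Measurable (a n))
    (hindep : iIndepFun a ℙ)
    (hdist : ∀ n, ℙ {ω | a n ω = 1} = 1/2 ∧ ℙ {ω | a n ω = -1} = 1/2)
    (x : ℝ) (hx : 0 < x) (hx1 : x ≤ 1) :
    ℙ {ω | ∀ 𝔪 : Set ℝ, MeasurableSet 𝔪 → 𝔪 ⊆ Set.Icc (0:ℝ) 1 →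
        volume 𝔪 = ENNReal.ofReal x →
        (∫ u in 𝔪, ‖∑ n : Fin N,
          (a n ω : ℂ) * Complex.exp (2 * Real.pi * Complex.I * ((n : ℕ) + 1) * u)‖ ^ 2) ≤
        (1 / 2) * ∫ u in (0:ℝ)..1, ‖∑ n : Fin N,
          (a n ω : ℂ) * Complex.exp (2 * Real.pi * Complex.I * ((n : ℕ) + 1) * u)‖ ^ 2}
      ≥ ENNReal.ofReal (1 - Real.sqrt (8 * x)) :=
  prob_M_le_half_general N hN a hmeas hindep hdist x hx
end

section
/- Let a_1,…,a_N be complex numbers with Σ_{n ≤ N}|a_n|² > 0, let δ ∈ (0,1), set A = 8δ^{-2}, and suppose Q² ≥ 1536π·δ^{-4}·N. If every Lebesgue-measurable set 𝔪 ⊆ [0,1] of measure 1/A satisfies ∫_𝔪 |S(u)|² du ≤ (1/2)·∫_0^1 |S(u)|² du, then Σ_{q ≤ Q} Σ_{1 ≤ a ≤ q, gcd(a,q)=1} |S(a/q)|² ≥ (Q²δ²/32)·Σ_{n ≤ N}|a_n|². -/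
/-!
Gallagher's argument. Write `F = ‖S‖²` and `Z = ∑ ‖a n‖²`; Parseval gives `∫₀¹ F = Z`, and
Parseval for `S'` with AM-GM gives `∫₀¹ |F'| ≤ 4πNZ`. Integrating `F u ≤ F x + ∫ |F'|` over the
Voronoi cell of a Farey fraction `x` of order `n = ⌊Q⌋`, cut down to `[0, 1] ∩ [x - P, x + P]`,
gives `∫_cell F ≤ 2P (F x + ∫_cell |F'|)`. The cells are almost disjoint, so the part of `[0, 1]`
within `P` of the Farey fractions carries `∫ F ≤ 2P (∑ F x + 4πNZ)`.

By Dirichlet every `u ∈ [0, 1]` lies within `1 / (q (n + 1))` of some `a / q` with `q ≤ n`, so the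
rest of `[0, 1]` has measure at most `∑_q 2φ(q) (1 / (q (n + 1)) - P)⁺ ≤ 3 / (4P (n + 1)²)`; the
factor `3/4` comes from `φ(q) ≤ q / 2` for even `q`. For `P = 3A / (4 (n + 1)²)` this is `1 / A`,
so by hypothesis the rest carries at most `Z / 2`, whence `∑ F x ≥ (n + 1)² Z / (3A) - 4πNZ`.
Dropping the point `x = 0` costs `F 0 ≤ NZ`.
-/

open MeasureTheory Real Metric Function
open scoped Nat ComplexConjugate

theorem integral_exp_mul_conj_exp (k l : ℕ) :
    ∫ u in (0:ℝ)..1, Complex.exp (2 * π * Complex.I * k * u) *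
      conj (Complex.exp (2 * π * Complex.I * l * u)) = if k = l then 1 else 0 := by
  have hexp : ∀ u : ℝ, Complex.exp (2 * π * Complex.I * k * u) *
      conj (Complex.exp (2 * π * Complex.I * l * u)) =
      Complex.exp ((((k : ℤ) - l : ℤ) * (2 * π * Complex.I)) * u) := by
    intro u
    rw [← Complex.exp_conj, ← Complex.exp_add]
    congr 1
    simp only [map_mul, map_ofNat, Complex.conj_ofReal, Complex.conj_natCast, Complex.conj_I]
    push_cast
    ring
  simp_rw [hexp]
  split_ifs with hkl
  · simp [hkl]
  · have hc : (((k : ℤ) - l : ℤ) : ℂ) * (2 * π * Complex.I) ≠ 0 :=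
      mul_ne_zero (Int.cast_ne_zero.mpr (by omega)) (by simp [Real.pi_ne_zero])
    rw [integral_exp_mul_complex hc, Complex.ofReal_one, mul_one,
      Complex.exp_int_mul_two_pi_mul_I]
    simp

noncomputable def trigPoly (s : Finset ℕ) (c : ℕ → ℂ) (u : ℝ) : ℂ :=
  ∑ k ∈ s, c k * Complex.exp (2 * π * Complex.I * k * u)

namespace trigPoly

variable (s : Finset ℕ) (c : ℕ → ℂ)

@[fun_prop]
theorem continuous : Continuous (trigPoly s c) := by
  unfold trigPoly; fun_prop

theorem hasDerivAt (u : ℝ) :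
    HasDerivAt (trigPoly s c) (trigPoly s (fun k => c k * (2 * π * Complex.I * k)) u) u := by
  refine HasDerivAt.fun_sum fun k _ => ?_
  have h := (((hasDerivAt_id' (u : ℂ)).const_mul (2 * π * Complex.I * k)).cexp.const_mul
    (c k)).comp_ofReal
  exact h.congr_deriv (by ring)

theorem hasDerivAt_norm_sq (u : ℝ) :
    HasDerivAt (fun u => ‖trigPoly s c u‖ ^ 2)
      (2 * inner ℝ (trigPoly s c u) (trigPoly s (fun k => c k * (2 * π * Complex.I * k)) u)) u :=
  (hasDerivAt s c u).norm_sq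

theorem integral_norm_sq :
    ∫ u in (0:ℝ)..1, ‖trigPoly s c u‖ ^ 2 = ∑ k ∈ s, ‖c k‖ ^ 2 := by
  apply Complex.ofReal_injective
  have hsq : ∀ u, ((‖trigPoly s c u‖ ^ 2 : ℝ) : ℂ) = ∑ k ∈ s, ∑ l ∈ s, c k * conj (c l) *
      (Complex.exp (2 * π * Complex.I * k * u) *
        conj (Complex.exp (2 * π * Complex.I * l * u))) := by
    intro u
    rw [Complex.ofReal_pow, ← Complex.mul_conj', trigPoly, map_sum, Finset.sum_mul_sum]
    refine Finset.sum_congr rfl fun k _ => Finset.sum_congr rfl fun l _ => ?_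
    rw [map_mul]; ring
  have hint : ∀ k l : ℕ, IntervalIntegrable (fun u : ℝ => c k * conj (c l) *
      (Complex.exp (2 * π * Complex.I * k * u) *
        conj (Complex.exp (2 * π * Complex.I * l * u)))) volume 0 1 :=
    fun k l => Continuous.intervalIntegrable (by fun_prop) _ _
  rw [← intervalIntegral.integral_ofReal]
  simp_rw [hsq]
  rw [intervalIntegral.integral_finsetSum]
  · simp_rw [intervalIntegral.integral_finsetSum fun l _ => hint _ l,
      intervalIntegral.integral_const_mul, integral_exp_mul_conj_exp, mul_ite, mul_one, mul_zero,
      Finset.sum_ite_eq, Complex.mul_conj']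
    push_cast
    exact Finset.sum_congr rfl fun k hk => if_pos hk
  · exact fun k _ => Continuous.intervalIntegrable (by fun_prop) _ _

theorem integral_abs_deriv_norm_sq_le {M : ℕ} (hM : 0 < M) (hs : ∀ k ∈ s, k ≤ M) :
    ∫ u in (0:ℝ)..1, |2 * inner ℝ (trigPoly s c u)
        (trigPoly s (fun k => c k * (2 * π * Complex.I * k)) u)|
      ≤ 4 * π * M * ∑ k ∈ s, ‖c k‖ ^ 2 := by
  set c' : ℕ → ℂ := fun k => c k * (2 * π * Complex.I * k)
  set l : ℝ := 2 * π * M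
  have hl : 0 < l := by positivity
  have hpt : ∀ u, |2 * inner ℝ (trigPoly s c u) (trigPoly s c' u)|
      ≤ l * ‖trigPoly s c u‖ ^ 2 + l⁻¹ * ‖trigPoly s c' u‖ ^ 2 := fun u => by
    rw [abs_mul, abs_two]
    calc 2 * |inner ℝ (trigPoly s c u) (trigPoly s c' u)|
        ≤ 2 * ‖trigPoly s c u‖ * ‖trigPoly s c' u‖ := by
          rw [mul_assoc]; gcongr; exact abs_real_inner_le_norm _ _
      _ ≤ _ := two_mul_le_add_mul_sq hl
  have hc' : ∑ k ∈ s, ‖c' k‖ ^ 2 ≤ l ^ 2 * ∑ k ∈ s, ‖c k‖ ^ 2 := by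
    rw [Finset.mul_sum]
    refine Finset.sum_le_sum fun k hk => ?_
    have hk : (k : ℝ) ≤ M := by exact_mod_cast hs k hk
    have : ‖2 * π * Complex.I * k‖ = 2 * π * k := by simp [abs_of_pos pi_pos]
    rw [norm_mul, this, mul_pow, mul_comm]
    gcongr
    exact mul_le_mul_of_nonneg_left hk (by positivity)
  calc ∫ u in (0:ℝ)..1, |2 * inner ℝ (trigPoly s c u) (trigPoly s c' u)|
      ≤ ∫ u in (0:ℝ)..1, (l * ‖trigPoly s c u‖ ^ 2 + l⁻¹ * ‖trigPoly s c' u‖ ^ 2) :=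
        intervalIntegral.integral_mono_on zero_le_one
          (Continuous.intervalIntegrable (by fun_prop) _ _)
          (Continuous.intervalIntegrable (by fun_prop) _ _) fun u _ => hpt u
    _ = l * ∑ k ∈ s, ‖c k‖ ^ 2 + l⁻¹ * ∑ k ∈ s, ‖c' k‖ ^ 2 := by
        rw [intervalIntegral.integral_add (Continuous.intervalIntegrable (by fun_prop) _ _)
          (Continuous.intervalIntegrable (by fun_prop) _ _), intervalIntegral.integral_const_mul,
          intervalIntegral.integral_const_mul, integral_norm_sq, integral_norm_sq]
    _ ≤ l * ∑ k ∈ s, ‖c k‖ ^ 2 + l⁻¹ * (l ^ 2 * ∑ k ∈ s, ‖c k‖ ^ 2) := by gcongr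
    _ = 4 * π * M * ∑ k ∈ s, ‖c k‖ ^ 2 := by field_simp; ring

theorem norm_sq_le (u : ℝ) : ‖trigPoly s c u‖ ^ 2 ≤ s.card * ∑ k ∈ s, ‖c k‖ ^ 2 := by
  calc ‖trigPoly s c u‖ ^ 2 ≤ (∑ k ∈ s, ‖c k‖) ^ 2 := by
        gcongr
        refine (norm_sum_le _ _).trans (Finset.sum_le_sum fun k _ => ?_)
        rw [norm_mul, Complex.norm_exp]
        simp
    _ ≤ s.card * ∑ k ∈ s, ‖c k‖ ^ 2 := sq_sum_le_card_mul_sum_sq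

end trigPoly

theorem integral_biUnion_finset₀ {X E ι : Type*} [MeasurableSpace X] {μ : Measure X}
    [NormedAddCommGroup E] [NormedSpace ℝ E] {f : X → E} (t : Finset ι) {s : ι → Set X}
    (hs : ∀ i ∈ t, NullMeasurableSet (s i) μ) (h's : (t : Set ι).Pairwise (AEDisjoint μ on s))
    (hf : ∀ i ∈ t, IntegrableOn f (s i) μ) :
    ∫ x in ⋃ i ∈ t, s i, f x ∂μ = ∑ i ∈ t, ∫ x in s i, f x ∂μ := by
  have hf' : IntegrableOn f (⋃ i ∈ t, s i) μ := integrableOn_finset_iUnion.2 hf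
  simp only [← Finset.mem_coe] at hf' ⊢
  rw [Set.biUnion_eq_iUnion] at hf' ⊢
  rw [integral_iUnion_ae (s := fun i : (t : Set ι) => s i) (fun i => hs i i.2)
    (h's.on_injective Subtype.coe_injective fun i => i.2) hf',
    Finset.tsum_subtype' t fun i => ∫ x in s i, f x ∂μ]

theorem setIntegral_le_of_hasDerivAt_of_starConvex {F D : ℝ → ℝ}
    (hF : ∀ u, HasDerivAt F (D u) u) (hD : Continuous D) {W : Set ℝ} {x : ℝ}
    (hW : StarConvex ℝ x W) (hWc : IsCompact W) :
    ∫ u in W, F u ≤ volume.real W * (F x + ∫ u in W, |D u|) := by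
  have hFc : Continuous F := continuous_iff_continuousAt.2 fun u => (hF u).continuousAt
  have hDW : IntegrableOn (fun u => |D u|) W := hD.abs.continuousOn.integrableOn_compact hWc
  have hpt : ∀ u ∈ W, F u ≤ F x + ∫ t in W, |D t| := by
    intro u hu
    have hftc : ∫ t in u..x, D t = F x - F u :=
      intervalIntegral.integral_eq_sub_of_hasDerivAt (fun t _ => hF t) (hD.intervalIntegrable _ _)
    have hux : Set.uIoc u x ⊆ W := by
      refine Set.uIoc_subset_uIcc.trans ?_
      rw [Set.uIcc_comm, ← segment_eq_uIcc]
      exact hW.segment_subset hu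
    have hI := intervalIntegral.norm_integral_le_integral_norm_uIoc (f := D) (μ := volume)
      (a := u) (b := x)
    simp only [Real.norm_eq_abs] at hI
    have := hI.trans
      (setIntegral_mono_set hDW (ae_of_all _ fun t => abs_nonneg (D t)) hux.eventuallyLE)
    linarith [neg_abs_le (∫ t in u..x, D t)]
  calc ∫ u in W, F u ≤ ∫ _ in W, (F x + ∫ t in W, |D t|) :=
        setIntegral_mono_on (hFc.continuousOn.integrableOn_compact hWc)
          (integrableOn_const hWc.measure_ne_top) hWc.measurableSet hpt
    _ = volume.real W * (F x + ∫ u in W, |D u|) := by rw [setIntegral_const, smul_eq_mul]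

def voronoiCell {α : Type*} [PseudoMetricSpace α] (X : Finset α) (x : α) : Set α :=
  {v | ∀ y ∈ X, dist v x ≤ dist v y}

theorem isClosed_voronoiCell {α : Type*} [PseudoMetricSpace α] (X : Finset α) (x : α) :
    IsClosed (voronoiCell X x) := by
  simp only [voronoiCell, Set.ofPred_forall]
  exact isClosed_biInter fun y _ => isClosed_le (by fun_prop) (by fun_prop)

theorem starConvex_voronoiCell {E : Type*} [NormedAddCommGroup E] [NormedSpace ℝ E]
    (X : Finset E) (x : E) : StarConvex ℝ x (voronoiCell X x) := by
  refine starConvex_iff_segment_subset.2 fun v hv t ht y hy => ?_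
  have h := dist_add_dist_of_mem_segment ht
  have htri := dist_triangle v t y
  have hvy := hv y hy
  rw [dist_comm x t, dist_comm x v] at h
  rw [dist_comm v t] at htri
  linarith

theorem exists_mem_voronoiCell {α : Type*} [PseudoMetricSpace α] {X : Finset α}
    (hX : X.Nonempty) (v : α) : ∃ x ∈ X, v ∈ voronoiCell X x :=
  X.exists_min_image (dist v) hX

theorem aedisjoint_voronoiCell {X : Finset ℝ} {x y : ℝ} (hx : x ∈ X) (hy : y ∈ X) (hxy : x ≠ y) :
    AEDisjoint volume (voronoiCell X x) (voronoiCell X y) := by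
  refine measure_mono_null (fun v hv => ?_) (measure_singleton ((x + y) / 2))
  have h : |v - x| = |v - y| := le_antisymm (hv.1 y hy) (hv.2 x hx)
  rcases abs_eq_abs.1 h with h | h
  · exact absurd (by linarith) hxy
  · show v = (x + y) / 2
    linarith

theorem biUnion_inter_closedBall_inter_voronoiCell {α : Type*} [PseudoMetricSpace α]
    (K : Set α) (X : Finset α) (P : ℝ) :
    ⋃ x ∈ X, K ∩ closedBall x P ∩ voronoiCell X x = K ∩ ⋃ x ∈ X, closedBall x P := by
  ext v
  simp only [Set.mem_iUnion₂, Set.mem_inter_iff, exists_prop]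
  constructor
  · rintro ⟨x, hx, ⟨hv, hvx⟩, -⟩
    exact ⟨hv, x, hx, hvx⟩
  · rintro ⟨hv, x₀, hx₀, hvx₀⟩
    obtain ⟨x, hx, hvx⟩ := exists_mem_voronoiCell ⟨x₀, hx₀⟩ v
    exact ⟨x, hx, ⟨hv, (hvx x₀ hx₀).trans hvx₀⟩, hvx⟩

theorem integral_inter_biUnion_closedBall_le {F D : ℝ → ℝ} (hF : ∀ u, HasDerivAt F (D u) u)
    (hD : Continuous D) {a b : ℝ} {X : Finset ℝ} (hX : ∀ x ∈ X, x ∈ Set.Icc a b)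
    (hFX : ∀ x ∈ X, 0 ≤ F x) {P : ℝ} (hP : 0 ≤ P) :
    ∫ u in Set.Icc a b ∩ ⋃ x ∈ X, closedBall x P, F u
      ≤ 2 * P * (∑ x ∈ X, F x + ∫ u in Set.Icc a b, |D u|) := by
  have hFc : Continuous F := continuous_iff_continuousAt.2 fun u => (hF u).continuousAt
  set W : ℝ → Set ℝ := fun x => Set.Icc a b ∩ closedBall x P ∩ voronoiCell X x
  have hWc : ∀ x, IsCompact (W x) := fun x =>
    (isCompact_Icc.inter_right isClosed_closedBall).inter_right (isClosed_voronoiCell X x)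
  have hWvol : ∀ x, volume.real (W x) ≤ 2 * P := fun x =>
    (measureReal_mono (Set.inter_subset_left.trans Set.inter_subset_right)
      measure_closedBall_lt_top.ne).trans (Real.volume_real_closedBall hP).le
  have hsum : ∀ g : ℝ → ℝ, Continuous g →
      ∫ u in ⋃ x ∈ X, W x, g u = ∑ x ∈ X, ∫ u in W x, g u :=
    fun g hg => integral_biUnion_finset₀ X (fun x _ => (hWc x).measurableSet.nullMeasurableSet)
      (fun x hx y hy hxy => (aedisjoint_voronoiCell hx hy hxy).mono Set.inter_subset_right
        Set.inter_subset_right)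
      fun x _ => hg.continuousOn.integrableOn_compact (hWc x)
  calc ∫ u in Set.Icc a b ∩ ⋃ x ∈ X, closedBall x P, F u
      = ∑ x ∈ X, ∫ u in W x, F u := by
        rw [← biUnion_inter_closedBall_inter_voronoiCell, hsum F hFc]
    _ ≤ ∑ x ∈ X, 2 * P * (F x + ∫ u in W x, |D u|) := by
        refine Finset.sum_le_sum fun x hx => ?_
        have hWx : StarConvex ℝ x (W x) :=
          (((convex_Icc a b).inter (convex_closedBall x P)).starConvex
            ⟨hX x hx, mem_closedBall_self hP⟩).inter (starConvex_voronoiCell X x)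
        refine (setIntegral_le_of_hasDerivAt_of_starConvex hF hD hWx (hWc x)).trans ?_
        exact mul_le_mul_of_nonneg_right (hWvol x)
          (add_nonneg (hFX x hx) (setIntegral_nonneg_of_ae (ae_of_all _ fun u => abs_nonneg _)))
    _ = 2 * P * (∑ x ∈ X, F x + ∫ u in ⋃ x ∈ X, W x, |D u|) := by
        rw [hsum _ hD.abs, ← Finset.mul_sum, Finset.sum_add_distrib]
    _ ≤ 2 * P * (∑ x ∈ X, F x + ∫ u in Set.Icc a b, |D u|) := by
        refine mul_le_mul_of_nonneg_left (add_le_add_right ?_ _) (by positivity)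
        exact setIntegral_mono_set (hD.abs.continuousOn.integrableOn_compact isCompact_Icc)
          (ae_of_all _ fun u => abs_nonneg (D u))
          (Set.iUnion₂_subset fun x _ =>
            Set.inter_subset_left.trans Set.inter_subset_left).eventuallyLE

theorem exists_coprime_abs_sub_div_le {u : ℝ} (hu : u ∈ Set.Icc (0 : ℝ) 1) {n : ℕ} (hn : 0 < n) :
    ∃ q a : ℕ, q ∈ Finset.Icc 1 n ∧ a ≤ q ∧ q.Coprime a ∧ |u - a / q| ≤ 1 / ((n + 1) * q) := by
  obtain ⟨r, hr, hrn⟩ := Real.exists_rat_abs_sub_le_and_den_le u hn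
  have hq : (0 : ℝ) < r.den := by exact_mod_cast r.den_pos
  have hr' : (r : ℝ) = r.num / r.den := Rat.cast_def r
  -- with `u ∈ [0, 1]`, this pins the integer `r.num` between `0` and `r.den`
  have hclose : |u * r.den - r.num| < 1 := by
    have h1 : (1 : ℝ) / ((n + 1) * r.den) < 1 / r.den := by
      gcongr; nlinarith [(by exact_mod_cast hn : (0 : ℝ) < n)]
    have : |u * r.den - r.num| = |u - r| * r.den := by
      rw [hr', show u * r.den - r.num = (u - r.num / r.den) * r.den by field_simp, abs_mul,
        abs_of_pos hq]
    rw [this, ← lt_div_iff₀ hq]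
    linarith
  have hnum0 : 0 ≤ r.num := by
    have : (-1 : ℝ) < r.num := by
      have := (abs_lt.1 hclose).2; nlinarith [hu.1]
    have : -1 < r.num := by exact_mod_cast this
    omega
  have hnum1 : r.num ≤ r.den := by
    have : (r.num : ℝ) < r.den + 1 := by
      have := (abs_lt.1 hclose).1; nlinarith [hu.2]
    have : r.num < r.den + 1 := by exact_mod_cast this
    omega
  have ha : ((r.num.natAbs : ℕ) : ℝ) = r.num := by
    rw [Nat.cast_natAbs, Int.cast_abs, abs_of_nonneg (by exact_mod_cast hnum0)]
  refine ⟨r.den, r.num.natAbs, Finset.mem_Icc.2 ⟨r.den_pos, hrn⟩, by omega, r.reduced.symm, ?_⟩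
  rwa [ha, ← hr']

noncomputable def fareyFractions (n : ℕ) : Finset ℝ :=
  insert 0 (((Finset.Icc 1 n).sigma fun q => (Finset.Icc 1 q).filter fun r => Nat.gcd r q = 1).image
    fun p => (p.2 : ℝ) / p.1)

theorem mem_Icc_of_mem_fareyFractions {n : ℕ} {x : ℝ} (hx : x ∈ fareyFractions n) :
    x ∈ Set.Icc (0 : ℝ) 1 := by
  simp only [fareyFractions, Finset.mem_insert, Finset.mem_image, Finset.mem_sigma,
    Finset.mem_filter, Finset.mem_Icc] at hx
  rcases hx with rfl | ⟨⟨q, r⟩, ⟨⟨hq, -⟩, ⟨-, hrq⟩, -⟩, rfl⟩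
  · simp
  · have hq' : (0 : ℝ) < q := by exact_mod_cast hq
    exact ⟨by positivity, div_le_one_of_le₀ (by exact_mod_cast hrq) hq'.le⟩

theorem div_mem_fareyFractions {n q a : ℕ} (hq : q ∈ Finset.Icc 1 n) (ha : a ≤ q)
    (hqa : q.Coprime a) : (a / q : ℝ) ∈ fareyFractions n := by
  rcases a.eq_zero_or_pos with rfl | ha0
  · simp [fareyFractions]
  · refine Finset.mem_insert_of_mem (Finset.mem_image.2 ⟨⟨q, a⟩, ?_, rfl⟩)
    simp only [Finset.mem_sigma, Finset.mem_filter, Finset.mem_Icc]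
    exact ⟨Finset.mem_Icc.1 hq, ⟨ha0, ha⟩, hqa.symm⟩

theorem sum_fareyFractions_le {n : ℕ} {f : ℝ → ℝ} (hf : ∀ x, 0 ≤ f x) :
    ∑ x ∈ fareyFractions n, f x ≤
      f 0 + ∑ q ∈ Finset.Icc 1 n, ∑ r ∈ (Finset.Icc 1 q).filter (fun r => Nat.gcd r q = 1),
        f (r / q) := by
  rw [Finset.sum_sigma']
  set T := (Finset.Icc 1 n).sigma fun q => (Finset.Icc 1 q).filter fun r => Nat.gcd r q = 1
  calc ∑ x ∈ fareyFractions n, f x ≤ f 0 + ∑ x ∈ T.image fun p => (p.2 : ℝ) / p.1, f x := by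
        by_cases h0 : (0 : ℝ) ∈ T.image fun p => (p.2 : ℝ) / p.1
        · rw [fareyFractions, Finset.insert_eq_of_mem h0]; linarith [hf 0]
        · rw [fareyFractions, Finset.sum_insert h0]
    _ ≤ f 0 + ∑ p ∈ T, f (p.2 / p.1) :=
        add_le_add_right (Finset.sum_image_le_of_nonneg fun x _ => hf x) _

theorem Nat.totient_two_mul_le (m : ℕ) : φ (2 * m) ≤ m := by
  induction m using Nat.strong_induction_on with
  | _ m ih =>
    rcases Nat.even_or_odd m with hm | hm
    · rw [Nat.totient_two_mul_of_even hm]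
      obtain ⟨k, rfl⟩ := hm
      rcases k.eq_zero_or_pos with rfl | hk
      · simp
      · have := ih k (by omega)
        rw [← two_mul]
        omega
    · rw [Nat.totient_two_mul_of_odd hm]
      exact Nat.totient_le m

theorem Nat.two_mul_totient_le (q : ℕ) : 2 * φ q ≤ (if Even q then 1 else 2) * q := by
  split_ifs with he
  · obtain ⟨m, rfl⟩ := he
    have := Nat.totient_two_mul_le m
    rw [← two_mul]
    omega
  · have := Nat.totient_le q
    omega

-- discrete form of `∫_{t-P}^{t+P} 2 max 0 s ds ≥ 2P · 2 max 0 t`, by convexity of `max 0`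
theorem four_mul_max_le_sq_sub_sq {P : ℝ} (hP : 0 < P) (t : ℝ) :
    4 * P * max 0 t ≤ max 0 (t + P) ^ 2 - max 0 (t - P) ^ 2 := by
  rcases le_total t 0 with h | h
  · rw [max_eq_left h]
    have : max 0 (t - P) ≤ max 0 (t + P) := max_le_max le_rfl (by linarith)
    nlinarith [le_max_left 0 (t - P)]
  · rw [max_eq_right h]
    rcases le_total P t with h' | h'
    · rw [max_eq_right (by linarith), max_eq_right (by linarith)]; nlinarith
    · rw [max_eq_right (by linarith), max_eq_left (by linarith)]; nlinarith

theorem four_mul_two_mul_totient_mul_max_le (B : ℝ) {P : ℝ} (hP : 0 < P) {q : ℕ} (hq : 1 ≤ q) :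
    4 * P * (2 * φ q * max 0 (1 / (B * q) - P)) ≤
      ((if Even q then 1 else 2 : ℕ) : ℝ) *
        (max 0 (1 / B - (q - 1) * P) ^ 2 - max 0 (1 / B - (q + 1) * P) ^ 2) := by
  have hq' : (0 : ℝ) < q := by exact_mod_cast hq
  have htot : 2 * (φ q : ℝ) ≤ ((if Even q then 1 else 2 : ℕ) : ℝ) * q := by
    exact_mod_cast Nat.two_mul_totient_le q
  have hmax : q * max 0 (1 / (B * q) - P) = max 0 (1 / B - q * P) := by
    rw [mul_max_of_nonneg _ _ hq'.le, mul_zero, mul_sub]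
    field_simp
  have htel := four_mul_max_le_sq_sub_sq hP (1 / B - q * P)
  rw [show 1 / B - q * P + P = 1 / B - ((q : ℝ) - 1) * P by ring,
    show 1 / B - q * P - P = 1 / B - ((q : ℝ) + 1) * P by ring] at htel
  calc 4 * P * (2 * φ q * max 0 (1 / (B * q) - P))
      ≤ 4 * P * (((if Even q then 1 else 2 : ℕ) : ℝ) * q * max 0 (1 / (B * q) - P)) := by
        gcongr
    _ = ((if Even q then 1 else 2 : ℕ) : ℝ) * (4 * P * max 0 (1 / B - q * P)) := by
        rw [← hmax]; ring
    _ ≤ _ := by gcongr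

theorem sum_totient_mul_max_le (n : ℕ) {B P : ℝ} (hB : 0 < B) (hP : 0 < P) :
    ∑ q ∈ Finset.Icc 1 n, 2 * (φ q : ℝ) * max 0 (1 / (B * q) - P) ≤ 3 / (4 * P * B ^ 2) := by
  set h : ℝ → ℝ := fun t => max 0 (1 / B - t * P) ^ 2
  set c : ℕ → ℝ := fun q => ((if Even q then 1 else 2 : ℕ) : ℝ)
  -- `c` has period 2, so `V q - V (q + 1) = c q * (h (q - 1) - h (q + 1))` telescopes
  set V : ℕ → ℝ := fun q => c q * h (q - 1) + c (q + 1) * h q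
  have hterm : ∀ q : ℕ, 1 ≤ q →
      4 * P * (2 * (φ q : ℝ) * max 0 (1 / (B * q) - P)) ≤ V q - V (q + 1) := by
    intro q hq
    have hc : c (q + 1 + 1) = c q := by simp [c, Nat.even_add_one]
    have hV : V q - V (q + 1) = c q * (h (q - 1) - h (q + 1)) := by
      simp only [V, hc, Nat.cast_add_one, add_sub_cancel_right]
      ring
    rw [hV]
    exact four_mul_two_mul_totient_mul_max_le B hP hq
  have htelescope : ∀ m : ℕ, ∑ q ∈ Finset.Icc 1 m,
      4 * P * (2 * (φ q : ℝ) * max 0 (1 / (B * q) - P)) ≤ V 1 - V (m + 1) := by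
    intro m
    induction m with
    | zero => simp
    | succ m ih =>
      rw [Finset.sum_Icc_succ_top (by omega)]
      linarith [hterm (m + 1) (by omega)]
  have hV1 : V 1 ≤ 3 / B ^ 2 := by
    have h1 : max 0 (1 / B - 1 * P) ^ 2 ≤ (1 / B) ^ 2 :=
      pow_le_pow_left₀ (le_max_left _ _) (max_le (by positivity) (by linarith)) 2
    have h0 : max 0 (1 / B - 0 * P) = 1 / B := by simp [hB.le]
    simp only [V, c, h, Nat.cast_one, sub_self, Nat.reduceAdd, h0]
    rw [if_neg Nat.not_even_one, if_pos even_two]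
    push_cast
    linarith [show 3 / B ^ 2 = 3 * (1 / B) ^ 2 by ring]
  have hsum := htelescope n
  rw [← Finset.mul_sum] at hsum
  rw [le_div_iff₀ (by positivity)]
  have hVn : 0 ≤ V (n + 1) := by positivity
  have hB2 : B ^ 2 * (3 / B ^ 2) = 3 := by field_simp
  nlinarith [mul_le_mul_of_nonneg_left hV1 (sq_nonneg B)]

theorem Icc_diff_biUnion_closedBall_fareyFractions_subset {n : ℕ} (hn : 0 < n) {P : ℝ}
    (hP : 0 ≤ P) :
    Set.Icc 0 1 \ ⋃ x ∈ fareyFractions n, closedBall x P ⊆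
      ⋃ q ∈ Finset.Icc 1 n,
        ((⋃ a ∈ (Finset.Icc 1 q).filter q.Coprime,
            Set.Icc ((a / q : ℝ) - 1 / ((n + 1) * q)) (a / q - P)) ∪
          ⋃ a ∈ (Finset.range q).filter q.Coprime,
            Set.Icc ((a / q : ℝ) + P) (a / q + 1 / ((n + 1) * q))) := by
  rintro u ⟨hu, hfar⟩
  obtain ⟨q, a, hq, haq, hcop, hua⟩ := exists_coprime_abs_sub_div_le hu hn
  have hq0 : (0 : ℝ) < q := by exact_mod_cast (Finset.mem_Icc.1 hq).1
  have hP' : P < |u - a / q| := by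
    by_contra! h
    exact hfar (Set.mem_biUnion (div_mem_fareyFractions hq haq hcop)
      (by rwa [mem_closedBall, dist_eq_norm]))
  simp only [Set.mem_iUnion, Set.mem_union, Finset.mem_filter, Finset.mem_Icc, Finset.mem_range,
    exists_prop]
  refine ⟨q, Finset.mem_Icc.1 hq, ?_⟩
  rcases lt_or_ge u (a / q) with hlt | hge
  · rw [abs_of_neg (by linarith)] at hP' hua
    have ha : 1 ≤ a := by
      by_contra! h
      simp only [Nat.lt_one_iff.1 h, Nat.cast_zero, zero_div] at hlt
      exact absurd hu.1 (not_le.2 hlt)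
    exact Or.inl ⟨a, ⟨⟨ha, haq⟩, hcop⟩, by linarith, by linarith⟩
  · rw [abs_of_nonneg (by linarith)] at hP' hua
    have ha : a < q := by
      refine lt_of_le_of_ne haq fun h => ?_
      rw [h, div_self hq0.ne'] at hP' hge
      linarith [hu.2]
    exact Or.inr ⟨a, ⟨ha, hcop⟩, by linarith, by linarith⟩

theorem volume_Icc_diff_biUnion_closedBall_fareyFractions_le {n : ℕ} (hn : 0 < n) {P : ℝ}
    (hP : 0 < P) :
    volume (Set.Icc 0 1 \ ⋃ x ∈ fareyFractions n, closedBall x P) ≤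
      ENNReal.ofReal (3 / (4 * P * (n + 1) ^ 2)) := by
  set m : ℕ → ℝ := fun q => max 0 (1 / ((n + 1) * q) - P)
  have hIcc : ∀ (q : ℕ) (y z : ℝ), z - y = 1 / ((n + 1) * q) - P →
      volume (Set.Icc y z) ≤ ENNReal.ofReal (m q) :=
    fun q y z h => by rw [Real.volume_Icc, h]; exact ENNReal.ofReal_le_ofReal (le_max_right _ _)
  have hcard : ∀ q, ((Finset.Icc 1 q).filter q.Coprime).card = φ q := fun q => by
    rw [← Nat.filter_coprime_Ico_eq_totient q 1, add_comm, Finset.Ico_add_one_right_eq_Icc]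
  refine (measure_mono (Icc_diff_biUnion_closedBall_fareyFractions_subset hn hP.le)).trans ?_
  refine (measure_biUnion_finset_le _ _).trans ?_
  calc ∑ q ∈ Finset.Icc 1 n, volume (_ ∪ _)
      ≤ ∑ q ∈ Finset.Icc 1 n, ENNReal.ofReal (2 * φ q * m q) := by
        refine Finset.sum_le_sum fun q _ => (measure_union_le _ _).trans ?_
        refine (add_le_add (measure_biUnion_finset_le _ _) (measure_biUnion_finset_le _ _)).trans ?_
        refine (add_le_add (Finset.sum_le_card_nsmul _ _ _ fun a _ => hIcc q _ _ (by ring))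
          (Finset.sum_le_card_nsmul _ _ _ fun a _ => hIcc q _ _ (by ring))).trans_eq ?_
        rw [hcard, ← Nat.totient_eq_card_coprime, nsmul_eq_mul, ← ENNReal.ofReal_natCast,
          ← ENNReal.ofReal_mul (Nat.cast_nonneg _),
          ← ENNReal.ofReal_add (by positivity) (by positivity)]
        ring_nf
    _ = ENNReal.ofReal (∑ q ∈ Finset.Icc 1 n, 2 * φ q * m q) :=
        (ENNReal.ofReal_sum_of_nonneg fun q _ => by positivity).symm
    _ ≤ ENNReal.ofReal (3 / (4 * P * (n + 1) ^ 2)) :=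
        ENNReal.ofReal_le_ofReal (sum_totient_mul_max_le n (by positivity) hP)

theorem exists_measurableSet_superset_volume_eq {m : Set ℝ} (hm : MeasurableSet m) {a b α : ℝ}
    (hmab : m ⊆ Set.Icc a b) (hα : 0 ≤ α) (hαab : α ≤ b - a) (hvol : volume m ≤ ENNReal.ofReal α) :
    ∃ m', MeasurableSet m' ∧ m ⊆ m' ∧ m' ⊆ Set.Icc a b ∧ volume m' = ENNReal.ofReal α := by
  have hfin : ∀ t, volume (m ∪ Set.Icc a t) ≠ ⊤ := fun t =>
    measure_union_ne_top (ne_top_of_le_ne_top ENNReal.ofReal_ne_top hvol) measure_Icc_lt_top.ne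
  set f : ℝ → ℝ := fun t => volume.real (m ∪ Set.Icc a t)
  have hf : LipschitzWith 1 f := LipschitzWith.of_le_add fun t s => by
    have hsub : m ∪ Set.Icc a t ⊆ (m ∪ Set.Icc a s) ∪ Set.Icc s t := by
      rintro u (hu | ⟨hau, hut⟩)
      · exact Or.inl (Or.inl hu)
      · rcases le_total u s with hus | hsu
        · exact Or.inl (Or.inr ⟨hau, hus⟩)
        · exact Or.inr ⟨hsu, hut⟩
    calc f t ≤ volume.real ((m ∪ Set.Icc a s) ∪ Set.Icc s t) :=
          measureReal_mono hsub (measure_union_ne_top (hfin s) measure_Icc_lt_top.ne)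
      _ ≤ f s + volume.real (Set.Icc s t) := measureReal_union_le _ _
      _ ≤ f s + dist t s := by
          rw [Real.volume_real_Icc, Real.dist_eq]
          exact add_le_add_right (max_le (le_abs_self _) (abs_nonneg _)) _
  have hfa : f a ≤ α := by
    refine ENNReal.toReal_le_of_le_ofReal hα ((measure_union_le _ _).trans ?_)
    rw [Set.Icc_self, measure_singleton, add_zero]
    exact hvol
  have hfb : f b = b - a := by
    simp only [f, Set.union_eq_self_of_subset_left hmab]
    exact Real.volume_real_Icc_of_le (by linarith)
  obtain ⟨t, ht, hft⟩ := intermediate_value_Icc (by linarith) hf.continuous.continuousOn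
    ⟨hfa, hfb ▸ hαab⟩
  refine ⟨m ∪ Set.Icc a t, hm.union measurableSet_Icc, Set.subset_union_left,
    Set.union_subset hmab (Set.Icc_subset_Icc_right ht.2), ?_⟩
  rw [← hft]
  exact (ENNReal.ofReal_toReal (hfin t)).symm

theorem setIntegral_le_of_volume_le_of_forall_volume_eq {f : ℝ → ℝ} (hf : ∀ u, 0 ≤ f u)
    (hfi : IntegrableOn f (Set.Icc 0 1)) {α c : ℝ} (hα : 0 ≤ α) (hα1 : α ≤ 1)
    (h : ∀ m : Set ℝ, MeasurableSet m → m ⊆ Set.Icc 0 1 → volume m = ENNReal.ofReal α →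
      ∫ u in m, f u ≤ c) :
    ∀ m : Set ℝ, MeasurableSet m → m ⊆ Set.Icc 0 1 → volume m ≤ ENNReal.ofReal α →
      ∫ u in m, f u ≤ c := by
  intro m hm hm1 hvol
  obtain ⟨m', hm', hmm', hm'1, hvol'⟩ :=
    exists_measurableSet_superset_volume_eq hm hm1 hα (by linarith) hvol
  exact (setIntegral_mono_set (hfi.mono_set hm'1) (ae_of_all _ fun u => hf u)
    hmm'.eventuallyLE).trans (h m' hm' hm'1 hvol')

theorem le_sum_norm_sq_trigPoly_fareyFractions {N n : ℕ} (hN : 0 < N) (hn : 0 < n) (a : ℕ → ℂ)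
    {P θ : ℝ} (hP : 0 < P)
    (hθ : ∀ m : Set ℝ, MeasurableSet m → m ⊆ Set.Icc 0 1 →
      volume m ≤ ENNReal.ofReal (3 / (4 * P * (n + 1) ^ 2)) →
      ∫ u in m, ‖trigPoly (Finset.Icc 1 N) a u‖ ^ 2 ≤ θ * ∑ k ∈ Finset.Icc 1 N, ‖a k‖ ^ 2) :
    (1 - θ) * (∑ k ∈ Finset.Icc 1 N, ‖a k‖ ^ 2) / (2 * P) -
        (4 * π + 1) * N * ∑ k ∈ Finset.Icc 1 N, ‖a k‖ ^ 2 ≤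
      ∑ q ∈ Finset.Icc 1 n, ∑ r ∈ (Finset.Icc 1 q).filter (fun r => Nat.gcd r q = 1),
        ‖trigPoly (Finset.Icc 1 N) a (r / q)‖ ^ 2 := by
  set S := trigPoly (Finset.Icc 1 N) a
  set Z := ∑ k ∈ Finset.Icc 1 N, ‖a k‖ ^ 2
  set X := fareyFractions n
  set D := fun u => 2 * inner ℝ (S u) (trigPoly (Finset.Icc 1 N)
    (fun k => a k * (2 * π * Complex.I * k)) u)
  have hIcc : ∀ g : ℝ → ℝ, ∫ u in Set.Icc 0 1, g u = ∫ u in (0:ℝ)..1, g u := fun g => by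
    rw [integral_Icc_eq_integral_Ioc, intervalIntegral.integral_of_le zero_le_one]
  have hmeas : MeasurableSet (⋃ x ∈ X, closedBall x P) :=
    X.measurableSet_biUnion fun x _ => measurableSet_closedBall
  have htotal : (∫ u in Set.Icc 0 1 ∩ ⋃ x ∈ X, closedBall x P, ‖S u‖ ^ 2) +
      ∫ u in Set.Icc 0 1 \ ⋃ x ∈ X, closedBall x P, ‖S u‖ ^ 2 = Z := by
    rw [integral_inter_add_sdiff hmeas
      (by fun_prop : Continuous fun u => ‖S u‖ ^ 2).integrableOn_Icc,
      hIcc, trigPoly.integral_norm_sq]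
  have hcovered := integral_inter_biUnion_closedBall_le (trigPoly.hasDerivAt_norm_sq _ a)
    (by fun_prop : Continuous D) (X := X) (fun x hx => mem_Icc_of_mem_fareyFractions hx)
    (fun x _ => sq_nonneg ‖S x‖) hP.le
  have huncovered : ∫ u in Set.Icc 0 1 \ ⋃ x ∈ X, closedBall x P, ‖S u‖ ^ 2 ≤ θ * Z :=
    hθ _ (measurableSet_Icc.diff hmeas) Set.sdiff_subset
      (volume_Icc_diff_biUnion_closedBall_fareyFractions_le hn hP)
  have hD : ∫ u in Set.Icc 0 1, |D u| ≤ 4 * π * N * Z := by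
    simpa only [hIcc, Nat.card_Icc, add_tsub_cancel_right] using
      trigPoly.integral_abs_deriv_norm_sq_le _ a hN fun k hk => (Finset.mem_Icc.1 hk).2
  have hS0 : ‖S 0‖ ^ 2 ≤ N * Z := by
    simpa only [Nat.card_Icc, add_tsub_cancel_right] using
      trigPoly.norm_sq_le (Finset.Icc 1 N) a 0
  have hX := (sum_fareyFractions_le (n := n) fun x => sq_nonneg ‖S x‖).trans
    (add_le_add_left hS0 _)
  have := hcovered.trans (mul_le_mul_of_nonneg_left (add_le_add hX hD) (by positivity))
  rw [sub_le_iff_le_add, div_le_iff₀ (by positivity)]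
  linarith

theorem le_sq_mul_sq_of_sq_ge {δ Q : ℝ} {N : ℕ} (hδ : δ ∈ Set.Ioo 0 1)
    (hQ : Q ^ 2 ≥ 1536 * π * δ⁻¹ ^ 4 * N) : 1536 * π * N ≤ Q ^ 2 * δ ^ 2 :=
  calc 1536 * π * N ≤ 1536 * π * N * δ⁻¹ ^ 2 :=
        le_mul_of_one_le_right (by positivity) (one_le_pow₀ ((one_le_inv₀ hδ.1).2 hδ.2.le))
    _ = 1536 * π * δ⁻¹ ^ 4 * N * δ ^ 2 := by field_simp [hδ.1.ne']
    _ ≤ Q ^ 2 * δ ^ 2 := by gcongr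

theorem sq_mul_sq_div_le_sq_div_sub {δ A Q B : ℝ} {N : ℕ} (hδ : 0 < δ) (hA : A = 8 * δ⁻¹ ^ 2)
    (hQδ : 1536 * π * N ≤ Q ^ 2 * δ ^ 2) (hQ : 0 ≤ Q) (hQB : Q ≤ B) :
    Q ^ 2 * δ ^ 2 / 32 ≤ B ^ 2 / (3 * A) - (4 * π + 1) * N := by
  have hBA : B ^ 2 / (3 * A) = B ^ 2 * δ ^ 2 / 24 := by rw [hA]; field_simp; ring
  have hQB2 : Q ^ 2 * δ ^ 2 ≤ B ^ 2 * δ ^ 2 := by gcongr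
  nlinarith [pi_gt_three, (Nat.cast_nonneg N : (0 : ℝ) ≤ N)]

/-- Deterministic step deducing the Theorem from the Lemma: if every measurable
`𝔪 ⊆ [0,1]` of measure `1/A` (with `A = 8δ⁻²`) satisfies
`∫_𝔪 |S|² ≤ (1/2)∫_0^1 |S|²`, and `Q² ≥ 1536π δ⁻⁴ N`, then
`Σ_{q≤Q} Σ_{(a,q)=1} |S(a/q)|² ≥ (Q²δ²/32) Σ |a_n|²`. -/
theorem large_sieve_lower_bound_of_M_small (N : ℕ) (a : ℕ → ℂ)
    (hpos : 0 < ∑ n ∈ Finset.Icc 1 N, ‖a n‖ ^ 2)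
    (S : ℝ → ℂ)
    (hS : ∀ u : ℝ, S u = ∑ n ∈ Finset.Icc 1 N,
      a n * Complex.exp (2 * Real.pi * Complex.I * n * u))
    (δ : ℝ) (hδ : δ ∈ Set.Ioo (0:ℝ) 1) (A : ℝ) (hA : A = 8 * δ⁻¹ ^ 2)
    (Q : ℝ) (hQpos : 0 < Q) (hQ : Q ^ 2 ≥ 1536 * Real.pi * δ⁻¹ ^ 4 * N)
    (hM : ∀ 𝔪 : Set ℝ, MeasurableSet 𝔪 → 𝔪 ⊆ Set.Icc (0:ℝ) 1 →
      volume 𝔪 = ENNReal.ofReal (1 / A) →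
      (∫ u in 𝔪, ‖S u‖ ^ 2) ≤
        (1 / 2) * ∫ u in (0:ℝ)..1, ‖S u‖ ^ 2) :
    (∑ q ∈ Finset.Icc 1 ⌊Q⌋₊, ∑ r ∈ (Finset.Icc 1 q).filter (fun r => Nat.gcd r q = 1),
        ‖S ((r : ℝ) / q)‖ ^ 2) ≥
      Q ^ 2 * δ ^ 2 / 32 * ∑ n ∈ Finset.Icc 1 N, ‖a n‖ ^ 2 := by
  obtain rfl : S = trigPoly (Finset.Icc 1 N) a := funext hS
  have hN : 0 < N := Nat.pos_of_ne_zero fun h => by simp [h] at hpos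
  have hQδ := le_sq_mul_sq_of_sq_ge hδ hQ
  have hA1 : 1 ≤ A := by
    rw [hA]; nlinarith [one_le_pow₀ (n := 2) ((one_le_inv₀ hδ.1).2 hδ.2.le)]
  have hn : 0 < ⌊Q⌋₊ := by
    have : Q ^ 2 * δ ^ 2 ≤ Q ^ 2 := mul_le_of_le_one_right (sq_nonneg Q) (by nlinarith [hδ.1, hδ.2])
    exact Nat.floor_pos.2 (by nlinarith [pi_gt_three, (by exact_mod_cast hN : (1 : ℝ) ≤ N)])
  set B : ℝ := ⌊Q⌋₊ + 1
  have hQB : Q < B := Nat.lt_floor_add_one Q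
  set P := 3 * A / (4 * B ^ 2)
  have hB : 0 < B := hQpos.trans hQB
  have hPA : 3 / (4 * P * B ^ 2) = 1 / A := by simp only [P]; field_simp
  have hPB : (1 - 1 / 2) / (2 * P) = B ^ 2 / (3 * A) := by simp only [P]; field_simp; ring
  have hθ := setIntegral_le_of_volume_le_of_forall_volume_eq (fun u => sq_nonneg _)
    (by fun_prop : Continuous fun u => ‖trigPoly (Finset.Icc 1 N) a u‖ ^ 2).integrableOn_Icc
    (by positivity) ((div_le_one (by positivity)).2 hA1) fun m hm hm1 hvol =>
      (hM m hm hm1 hvol).trans_eq (by rw [trigPoly.integral_norm_sq])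
  have key := le_sum_norm_sq_trigPoly_fareyFractions hN hn a (by positivity) fun m hm hm1 hvol =>
    hθ m hm hm1 (hvol.trans_eq (congrArg ENNReal.ofReal hPA))
  calc Q ^ 2 * δ ^ 2 / 32 * ∑ k ∈ Finset.Icc 1 N, ‖a k‖ ^ 2
      ≤ (B ^ 2 / (3 * A) - (4 * π + 1) * N) * ∑ k ∈ Finset.Icc 1 N, ‖a k‖ ^ 2 := by
        gcongr
        exact sq_mul_sq_div_le_sq_div_sub hδ.1 hA hQδ hQpos.le hQB.le
    _ = _ := by rw [← hPB]; ring
    _ ≤ _ := key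
end
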